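/- arXiv:2204.11564 — 7 statements merged into one kernel-verified Lean document; each statement's English description precedes it below -/
import Mathlib

section
/- Exact dual reformulation of the MMD-DRCCP constraint (Proposition 1). Fix a decision x and suppose f(x,·) : Ξ → ℝ is Borel measurable and the set {ξ ∈ Ξ : f(x,ξ) > 0} is open (so that the indicator 𝟙(f(x,·)>0) is lower semicontinuous). Let Ξ be a compact metric space, φ : Ξ → H continuous, and ε > 0. Then sup over all probability measures P on Ξ with MMD(P, P̂_N) ≤ ε of P{ξ : f(x,ξ) > 0} equals the minimum, over all g₀ ∈ ℝ and g ∈ H satisfying 𝟙(f(x,ξ)>0) ≤ g₀ + ⟨g, φ(ξ)⟩_H for every ξ ∈ Ξ, of g₀ + (1/N)∑_{i=1}^N ⟨g, φ(ξ_i)⟩_H + ε‖g‖_H, and this minimum is attained. Consequently, inf_{P∈𝒫} P{ξ : f(x,ξ) ≤ 0} ≥ 1−α holds if and only if there exist g₀ ∈ ℝ and g ∈ H with 𝟙(f(x,ξ)>0) ≤ g₀ + ⟨g, φ(ξ)⟩_H for all ξ ∈ Ξ and g₀ + (1/N)∑_{i=1}^N ⟨g, φ(ξ_i)⟩_H + ε‖g‖_H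 ≤ α. -/
/-!
Weak duality: integrating a pointwise majorant `𝟙_A ≤ g₀ + ⟪g, φ⟫` against `P` gives
`P A ≤ g₀ + ⟪g, ∫ φ dP⟫ ≤ g₀ + ⟪g, μ⟫ + ε‖g‖` by Cauchy–Schwarz on the MMD ball.

Strong duality: the moment set `{(∫ φ dP, P A)}` of all probability measures is convex, and
it misses the open convex set `ball μ ε × (t, ∞)` where `t` is the worst-case probability.
A separating functional has the form `(m, s) ↦ ⟪a, m⟫ + b s`; since the empirical point
`(μ, P̂ A)` lies in the moment set, `b < 0`, and dividing by `-b` turns the separation into an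
affine majorant `s ≤ g₀ + ⟪g, m⟫` of the moment set whose dual value is at most `t`.
Evaluated at Dirac measures, this majorant is exactly a dual feasible point.
-/

open MeasureTheory RealInnerProductSpace

section Separation
variable {E : Type*} [NormedAddCommGroup E] [InnerProductSpace ℝ E] [CompleteSpace E]

lemma StrongDual.exists_inner_add_mul_eq (F : StrongDual ℝ (E × ℝ)) :
    ∃ (a : E) (b : ℝ), ∀ p : E × ℝ, F p = ⟪a, p.1⟫ + b * p.2 := by
  refine ⟨(InnerProductSpace.toDual ℝ E).symm (F.comp (.inl ℝ E ℝ)), F (0, 1), fun p => ?_⟩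
  have hp : p = (p.1, 0) + p.2 • (0, 1) := by ext <;> simp
  rw [InnerProductSpace.toDual_symm_apply, ContinuousLinearMap.comp_apply,
    ContinuousLinearMap.inl_apply, mul_comm, ← smul_eq_mul, ← F.map_smul, ← F.map_add, ← hp]

lemma Convex.exists_affine_majorant_of_ball {K : Set (E × ℝ)} (hK : Convex ℝ K) {μ : E}
    {s₀ : ℝ} (hμ : (μ, s₀) ∈ K) {ε t : ℝ} (hε : 0 < ε)
    (ht : ∀ p ∈ K, ‖p.1 - μ‖ < ε → p.2 ≤ t) :
    ∃ (g₀ : ℝ) (g : E), (∀ p ∈ K, p.2 ≤ g₀ + ⟪g, p.1⟫) ∧ g₀ + ⟪g, μ⟫ + ε * ‖g‖ ≤ t := by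
  set U : Set (E × ℝ) := Metric.ball μ ε ×ˢ Set.Ioi t
  have hUK : Disjoint U K := Set.disjoint_left.2 fun p ⟨hp₁, hp₂⟩ hpK =>
    (ht p hpK (mem_ball_iff_norm.1 hp₁)).not_gt hp₂
  obtain ⟨F, u, hFU, hFK⟩ := geometric_hahn_banach_open
    ((convex_ball μ ε).prod (convex_Ioi t)) (Metric.isOpen_ball.prod isOpen_Ioi) hK hUK
  obtain ⟨a, b, hF⟩ := F.exists_inner_add_mul_eq
  have hFcl : ∀ p ∈ Metric.closedBall μ ε ×ˢ Set.Ici t, F p ≤ u := by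
    rw [← closure_ball μ hε.ne', ← closure_Ioi, ← closure_prod_eq]
    exact fun p hp => closure_lt_subset_le F.continuous continuous_const (closure_mono hFU hp)
  have hb : b < 0 := by
    have h₁ := hFK _ hμ
    have h₂ := hFU (μ, t + 1) ⟨Metric.mem_ball_self hε, lt_add_one t⟩
    have h₃ := ht _ hμ (by simpa using hε)
    simp only [hF] at h₁ h₂
    nlinarith
  have hnorm : ⟪a, μ⟫ + ε * ‖a‖ + b * t ≤ u := by
    have := hFcl (μ + (ε / ‖a‖) • a, t) ⟨?_, le_refl t⟩
    · rw [hF, inner_add_right, real_inner_smul_right, real_inner_self_eq_norm_sq] at this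
      rcases eq_or_ne a 0 with rfl | ha
      · simpa using this
      · field_simp at this ⊢; linarith
    · rcases eq_or_ne a 0 with rfl | ha
      · simpa using hε.le
      · rw [mem_closedBall_iff_norm, add_sub_cancel_left, norm_smul,
          Real.norm_of_nonneg (by positivity), div_mul_cancel₀ _ (norm_ne_zero_iff.2 ha)]
  have hb' : 0 < -b := neg_pos.2 hb
  refine ⟨u / b, (-b)⁻¹ • a, fun p hp => ?_, ?_⟩
  · have hup := hFK p hp
    rw [hF] at hup
    rw [real_inner_smul_left, show u / b + (-b)⁻¹ * ⟪a, p.1⟫ = (⟪a, p.1⟫ - u) / -b by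
      field_simp; ring, le_div_iff₀ hb']
    linarith
  · rw [real_inner_smul_left, norm_smul, Real.norm_of_nonneg (inv_nonneg.2 hb'.le),
      show u / b + (-b)⁻¹ * ⟪a, μ⟫ + ε * ((-b)⁻¹ * ‖a‖) = (⟪a, μ⟫ + ε * ‖a‖ - u) / -b by
        field_simp; ring, div_le_iff₀ hb']
    linarith
end Separation

section Moments
variable {Ξ : Type*} [MeasurableSpace Ξ]
variable {E : Type*} [NormedAddCommGroup E] [InnerProductSpace ℝ E]

def momentSet (φ : Ξ → E) (A : Set Ξ) : Set (E × ℝ) :=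
  {p | ∃ P : Measure Ξ, IsProbabilityMeasure P ∧ Integrable φ P ∧
    p = (∫ ξ, φ ξ ∂P, (P A).toReal)}

def mmdBallProbs (φ : Ξ → E) (μ : E) (ε : ℝ) (A : Set Ξ) : Set ℝ :=
  {r | ∃ P : Measure Ξ, IsProbabilityMeasure P ∧ ‖(∫ ξ, φ ξ ∂P) - μ‖ ≤ ε ∧ r = (P A).toReal}

variable (φ : Ξ → E) (A : Set Ξ) {μ : E} {ε : ℝ}

lemma convex_momentSet : Convex ℝ (momentSet φ A) := by
  rintro _ ⟨P, hP, hPφ, rfl⟩ _ ⟨Q, hQ, hQφ, rfl⟩ a b ha hb hab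
  refine ⟨ENNReal.ofReal a • P + ENNReal.ofReal b • Q, ⟨?_⟩,
    (hPφ.smul_measure ENNReal.ofReal_ne_top).add_measure (hQφ.smul_measure ENNReal.ofReal_ne_top),
    ?_⟩
  · simp [← ENNReal.ofReal_add ha hb, hab]
  · rw [integral_add_measure (hPφ.smul_measure ENNReal.ofReal_ne_top)
      (hQφ.smul_measure ENNReal.ofReal_ne_top), integral_smul_measure, integral_smul_measure]
    simp only [Measure.add_apply, Measure.smul_apply, smul_eq_mul]
    rw [ENNReal.toReal_add (by finiteness) (by finiteness), ENNReal.toReal_mul,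
      ENNReal.toReal_mul, ENNReal.toReal_ofReal ha, ENNReal.toReal_ofReal hb]
    simp

lemma bddAbove_mmdBallProbs : BddAbove (mmdBallProbs φ μ ε A) := by
  refine ⟨1, ?_⟩
  rintro _ ⟨P, hP, -, rfl⟩
  exact ENNReal.toReal_le_of_le_ofReal zero_le_one (by simpa using prob_le_one)

variable {φ A}

lemma mem_mmdBallProbs_of_mem_momentSet {p : E × ℝ} (hp : p ∈ momentSet φ A)
    (hpμ : ‖p.1 - μ‖ ≤ ε) : p.2 ∈ mmdBallProbs φ μ ε A := by
  obtain ⟨P, hP, -, rfl⟩ := hp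
  exact ⟨P, hP, hpμ, rfl⟩

lemma nonempty_mmdBallProbs {s₀ : ℝ} (hμ : (μ, s₀) ∈ momentSet φ A) (hε : 0 ≤ ε) :
    (mmdBallProbs φ μ ε A).Nonempty :=
  ⟨s₀, mem_mmdBallProbs_of_mem_momentSet hμ (by simpa using hε)⟩

variable [CompleteSpace E]

lemma dirac_mem_momentSet [MeasurableSingletonClass Ξ] (ξ : Ξ) :
    (φ ξ, A.indicator 1 ξ) ∈ momentSet φ A := by
  refine ⟨Measure.dirac ξ, inferInstance, integrable_dirac enorm_lt_top, ?_⟩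
  by_cases hξ : ξ ∈ A <;> simp [Measure.dirac_apply, hξ]

lemma sum_smul_mem_momentSet [MeasurableSingletonClass Ξ] {ι : Type*} {t : Finset ι}
    {w : ι → ℝ} (hw₀ : ∀ i ∈ t, 0 ≤ w i) (hw₁ : ∑ i ∈ t, w i = 1) (z : ι → Ξ) :
    (∑ i ∈ t, w i • φ (z i), ∑ i ∈ t, w i * A.indicator 1 (z i)) ∈ momentSet φ A := by
  convert (convex_momentSet φ A).sum_mem hw₀ hw₁ fun i _ => dirac_mem_momentSet (z i)
    using 1
  ext <;> simp [Prod.fst_sum, Prod.snd_sum]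

lemma le_of_mem_momentSet {g₀ : ℝ} {g : E} (hA : MeasurableSet A)
    (hg : ∀ ξ, A.indicator 1 ξ ≤ g₀ + ⟪g, φ ξ⟫) {p : E × ℝ} (hp : p ∈ momentSet φ A) :
    p.2 ≤ g₀ + ⟪g, p.1⟫ := by
  obtain ⟨P, hP, hPφ, rfl⟩ := hp
  calc (P A).toReal = ∫ ξ, A.indicator 1 ξ ∂P := (integral_indicator_one hA).symm
    _ ≤ ∫ ξ, g₀ + ⟪g, φ ξ⟫ ∂P :=
      integral_mono ((integrable_const 1).indicator hA) ((integrable_const g₀).add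
        (hPφ.const_inner g)) hg
    _ = g₀ + ⟪g, ∫ ξ, φ ξ ∂P⟫ := by
      rw [integral_add (integrable_const g₀) (hPφ.const_inner g), integral_inner hPφ]
      simp

lemma forall_momentSet_le_iff [MeasurableSingletonClass Ξ] {g₀ : ℝ} {g : E}
    (hA : MeasurableSet A) :
    (∀ p ∈ momentSet φ A, p.2 ≤ g₀ + ⟪g, p.1⟫) ↔ ∀ ξ, A.indicator 1 ξ ≤ g₀ + ⟪g, φ ξ⟫ :=
  ⟨fun h ξ => h _ (dirac_mem_momentSet ξ), fun h _ => le_of_mem_momentSet hA h⟩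

lemma le_of_mem_mmdBallProbs (hφ : ∀ P : Measure Ξ, IsProbabilityMeasure P → Integrable φ P)
    (hA : MeasurableSet A) {g₀ : ℝ} {g : E} (hg : ∀ ξ, A.indicator 1 ξ ≤ g₀ + ⟪g, φ ξ⟫)
    {r : ℝ} (hr : r ∈ mmdBallProbs φ μ ε A) : r ≤ g₀ + ⟪g, μ⟫ + ε * ‖g‖ := by
  obtain ⟨P, hP, hPμ, rfl⟩ := hr
  have hmean := le_of_mem_momentSet hA hg ⟨P, hP, hφ P hP, rfl⟩
  have hdev : ⟪g, (∫ ξ, φ ξ ∂P) - μ⟫ ≤ ε * ‖g‖ := by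
    calc ⟪g, (∫ ξ, φ ξ ∂P) - μ⟫ ≤ ‖g‖ * ‖(∫ ξ, φ ξ ∂P) - μ‖ := real_inner_le_norm _ _
      _ ≤ ε * ‖g‖ := by rw [mul_comm]; exact mul_le_mul_of_nonneg_right hPμ (norm_nonneg g)
  rw [inner_sub_right] at hdev
  linarith

theorem exists_dual_minimizer_eq_sSup_mmdBallProbs [MeasurableSingletonClass Ξ]
    (hφ : ∀ P : Measure Ξ, IsProbabilityMeasure P → Integrable φ P)
    (hA : MeasurableSet A) (hε : 0 < ε) {s₀ : ℝ} (hμ : (μ, s₀) ∈ momentSet φ A) :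
    ∃ (g₀ : ℝ) (g : E), (∀ ξ, A.indicator 1 ξ ≤ g₀ + ⟪g, φ ξ⟫) ∧
      g₀ + ⟪g, μ⟫ + ε * ‖g‖ = sSup (mmdBallProbs φ μ ε A) ∧
      ∀ (g₀' : ℝ) (g' : E), (∀ ξ, A.indicator 1 ξ ≤ g₀' + ⟪g', φ ξ⟫) →
        g₀ + ⟪g, μ⟫ + ε * ‖g‖ ≤ g₀' + ⟪g', μ⟫ + ε * ‖g'‖ := by
  have hne := nonempty_mmdBallProbs hμ hε.le
  have hweak : ∀ (g₀ : ℝ) (g : E), (∀ ξ, A.indicator 1 ξ ≤ g₀ + ⟪g, φ ξ⟫) →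
      sSup (mmdBallProbs φ μ ε A) ≤ g₀ + ⟪g, μ⟫ + ε * ‖g‖ := fun g₀ g hg =>
    csSup_le hne fun r hr => le_of_mem_mmdBallProbs hφ hA hg hr
  obtain ⟨g₀, g, hgK, hgval⟩ := (convex_momentSet φ A).exists_affine_majorant_of_ball hμ hε
    fun p hp hpμ => le_csSup (bddAbove_mmdBallProbs _ _)
      (mem_mmdBallProbs_of_mem_momentSet hp hpμ.le)
  have hg := (forall_momentSet_le_iff hA).1 hgK
  have hval := le_antisymm hgval (hweak g₀ g hg)
  exact ⟨g₀, g, hg, hval, fun g₀' g' hg' => hval ▸ hweak g₀' g' hg'⟩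

lemma forall_mem_mmdBallProbs_le_iff [MeasurableSingletonClass Ξ]
    (hφ : ∀ P : Measure Ξ, IsProbabilityMeasure P → Integrable φ P)
    (hA : MeasurableSet A) (hε : 0 < ε) {s₀ : ℝ} (hμ : (μ, s₀) ∈ momentSet φ A) (α : ℝ) :
    (∀ r ∈ mmdBallProbs φ μ ε A, r ≤ α) ↔
      ∃ (g₀ : ℝ) (g : E), (∀ ξ, A.indicator 1 ξ ≤ g₀ + ⟪g, φ ξ⟫) ∧
        g₀ + ⟪g, μ⟫ + ε * ‖g‖ ≤ α := by
  refine ⟨fun h => ?_, fun ⟨g₀, g, hg, hα⟩ r hr => (le_of_mem_mmdBallProbs hφ hA hg hr).trans hα⟩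
  obtain ⟨g₀, g, hg, hval, -⟩ := exists_dual_minimizer_eq_sSup_mmdBallProbs hφ hA hε hμ
  exact ⟨g₀, g, hg, hval ▸ csSup_le (nonempty_mmdBallProbs hμ hε.le) h⟩

end Moments

theorem exact_dual_reformulation_MMD_DRCCP_general
    {Ξ : Type*} [MetricSpace Ξ] [CompactSpace Ξ] [MeasurableSpace Ξ] [BorelSpace Ξ]
    {H : Type*} [NormedAddCommGroup H] [InnerProductSpace ℝ H] [CompleteSpace H]
    (φ : Ξ → H) (hφ : Continuous φ)
    (f : Ξ → ℝ) (hfm : Measurable f)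
    {N : ℕ} (hN : 0 < N) (ξs : Fin N → Ξ)
    (ε : ℝ) (hε : 0 < ε) (α : ℝ) :
    -- (1) the worst-case probability equals the attained minimum of the dual program
    (∃ g₀ : ℝ, ∃ g : H,
      (∀ ξ : Ξ, (if 0 < f ξ then (1 : ℝ) else 0) ≤ g₀ + ⟪g, φ ξ⟫) ∧
      g₀ + (N : ℝ)⁻¹ * ∑ i, ⟪g, φ (ξs i)⟫ + ε * ‖g‖
        = sSup {r : ℝ | ∃ P : Measure Ξ, IsProbabilityMeasure P ∧
            ‖(∫ ξ, φ ξ ∂P) - (N : ℝ)⁻¹ • ∑ i, φ (ξs i)‖ ≤ ε ∧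
            r = (P {ξ : Ξ | 0 < f ξ}).toReal} ∧
      (∀ g₀' : ℝ, ∀ g' : H,
        (∀ ξ : Ξ, (if 0 < f ξ then (1 : ℝ) else 0) ≤ g₀' + ⟪g', φ ξ⟫) →
        g₀ + (N : ℝ)⁻¹ * ∑ i, ⟪g, φ (ξs i)⟫ + ε * ‖g‖
          ≤ g₀' + (N : ℝ)⁻¹ * ∑ i, ⟪g', φ (ξs i)⟫ + ε * ‖g'‖))
    ∧
    -- (2) consequently, the DR chance constraint holds iff the dual program is feasible
    -- with value at most α
    ((∀ P : Measure Ξ, IsProbabilityMeasure P →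
        ‖(∫ ξ, φ ξ ∂P) - (N : ℝ)⁻¹ • ∑ i, φ (ξs i)‖ ≤ ε →
        1 - α ≤ (P {ξ : Ξ | f ξ ≤ 0}).toReal) ↔
      (∃ g₀ : ℝ, ∃ g : H,
        (∀ ξ : Ξ, (if 0 < f ξ then (1 : ℝ) else 0) ≤ g₀ + ⟪g, φ ξ⟫) ∧
        g₀ + (N : ℝ)⁻¹ * ∑ i, ⟪g, φ (ξs i)⟫ + ε * ‖g‖ ≤ α)) := by
  set A := {ξ : Ξ | 0 < f ξ}
  set μ := (N : ℝ)⁻¹ • ∑ i, φ (ξs i)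
  have hA : MeasurableSet A := measurableSet_lt measurable_const hfm
  have hφint (P : Measure Ξ) (_ : IsProbabilityMeasure P) : Integrable φ P :=
    integrableOn_univ.1 (hφ.continuousOn.integrableOn_compact isCompact_univ)
  have hμ : (μ, ∑ i, (N : ℝ)⁻¹ * A.indicator 1 (ξs i)) ∈ momentSet φ A := by
    rw [show μ = ∑ i, (N : ℝ)⁻¹ • φ (ξs i) from Finset.smul_sum]
    exact sum_smul_mem_momentSet (fun _ _ => by positivity)
      (by simp [Finset.card_univ, hN.ne']) ξs
  have hind (ξ : Ξ) : (if 0 < f ξ then (1 : ℝ) else 0) = A.indicator 1 ξ := by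
    simp [A, Set.indicator_apply]
  have hmean (g : H) : (N : ℝ)⁻¹ * ∑ i, ⟪g, φ (ξs i)⟫ = ⟪g, μ⟫ := by
    rw [real_inner_smul_right, inner_sum]
  have hcompl (P : Measure Ξ) [IsProbabilityMeasure P] :
      (P {ξ | f ξ ≤ 0}).toReal = 1 - (P A).toReal := by
    rw [show {ξ | f ξ ≤ 0} = Aᶜ by ext; simp [A]]
    exact probReal_compl_eq_one_sub hA
  simp only [hind, hmean]
  refine ⟨exists_dual_minimizer_eq_sSup_mmdBallProbs hφint hA hε hμ, ?_⟩
  rw [← forall_mem_mmdBallProbs_le_iff hφint hA hε hμ]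
  constructor
  · rintro h r ⟨P, hP, hPμ, rfl⟩
    linarith [h P hP hPμ, hcompl P]
  · intro h P hP hPμ
    linarith [h _ ⟨P, hP, hPμ, rfl⟩, hcompl P]

/-- Exact dual reformulation of the MMD-DRCCP constraint (Proposition 1).
`f` plays the role of `f(x, ·)` for a fixed decision `x`; `g ∈ H` is identified
with the function `ξ ↦ ⟪g, φ ξ⟫`; the MMD ambiguity set is the ball of radius `ε`
around the empirical measure of the sample `ξs`, measured via the kernel mean
embeddings `∫ φ dP` and `(1/N) ∑ i, φ (ξs i)`. -/
theorem exact_dual_reformulation_MMD_DRCCP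
    {Ξ : Type*} [MetricSpace Ξ] [CompactSpace Ξ] [MeasurableSpace Ξ] [BorelSpace Ξ]
    {H : Type*} [NormedAddCommGroup H] [InnerProductSpace ℝ H] [CompleteSpace H]
    (φ : Ξ → H) (hφ : Continuous φ)
    (f : Ξ → ℝ) (hfm : Measurable f) (hfopen : IsOpen {ξ : Ξ | 0 < f ξ})
    {N : ℕ} (hN : 0 < N) (ξs : Fin N → Ξ)
    (ε : ℝ) (hε : 0 < ε) (α : ℝ) (hα : α ∈ Set.Ioo (0 : ℝ) 1) :
    -- (1) the worst-case probability equals the attained minimum of the dual program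
    (∃ g₀ : ℝ, ∃ g : H,
      (∀ ξ : Ξ, (if 0 < f ξ then (1 : ℝ) else 0) ≤ g₀ + ⟪g, φ ξ⟫) ∧
      g₀ + (N : ℝ)⁻¹ * ∑ i, ⟪g, φ (ξs i)⟫ + ε * ‖g‖
        = sSup {r : ℝ | ∃ P : Measure Ξ, IsProbabilityMeasure P ∧
            ‖(∫ ξ, φ ξ ∂P) - (N : ℝ)⁻¹ • ∑ i, φ (ξs i)‖ ≤ ε ∧
            r = (P {ξ : Ξ | 0 < f ξ}).toReal} ∧
      (∀ g₀' : ℝ, ∀ g' : H,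
        (∀ ξ : Ξ, (if 0 < f ξ then (1 : ℝ) else 0) ≤ g₀' + ⟪g', φ ξ⟫) →
        g₀ + (N : ℝ)⁻¹ * ∑ i, ⟪g, φ (ξs i)⟫ + ε * ‖g‖
          ≤ g₀' + (N : ℝ)⁻¹ * ∑ i, ⟪g', φ (ξs i)⟫ + ε * ‖g'‖))
    ∧
    -- (2) consequently, the DR chance constraint holds iff the dual program is feasible
    -- with value at most α
    ((∀ P : Measure Ξ, IsProbabilityMeasure P →
        ‖(∫ ξ, φ ξ ∂P) - (N : ℝ)⁻¹ • ∑ i, φ (ξs i)‖ ≤ ε →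
        1 - α ≤ (P {ξ : Ξ | f ξ ≤ 0}).toReal) ↔
      (∃ g₀ : ℝ, ∃ g : H,
        (∀ ξ : Ξ, (if 0 < f ξ then (1 : ℝ) else 0) ≤ g₀ + ⟪g, φ ξ⟫) ∧
        g₀ + (N : ℝ)⁻¹ * ∑ i, ⟪g, φ (ξs i)⟫ + ε * ‖g‖ ≤ α)) :=
  exact_dual_reformulation_MMD_DRCCP_general φ hφ f hfm hN ξs ε hε α
end

section
/- Minimax exchange for the distributionally robust CVaR (Lemma 1). Let Ξ be a compact metric space, φ : Ξ → H continuous (hence the kernel k is bounded and continuous and the MMD ball 𝒫 is weakly compact), ε > 0, α ∈ (0,1), and let f(x,·) : Ξ → ℝ be Borel measurable and bounded on Ξ. Then sup_{P∈𝒫} inf_{t∈ℝ} ( E_P[(f(x,ξ)+t)_+] − tα ) = inf_{t∈ℝ} sup_{P∈𝒫} ( E_P[(f(x,ξ)+t)_+] − tα ), where (·)_+ = max(0,·). -/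
/-!
For a fixed probability measure `P`, the CVaR objective `t ↦ E_P[(f + t)₊] - t α` is convex, and
since `|f| ≤ M` and `0 ≤ α ≤ 1` it decreases on `(-∞, -M]` and increases on `[M, ∞)`, so `t` may
be confined to the compact interval `[-M, M]`. In `P` the objective is affine along mixtures, and
the MMD ball is closed under mixtures because mean embeddings are affine in `P` and norm balls are
convex. The exchange of `sup` and `inf` is then Sion's minimax theorem, which in dimension one
follows from Komiya's argument: Helly's theorem on the line reduces it to two measures `P₁, P₂`, and for those a
connectedness argument along the segment of mixtures `l P₁ + (1 - l) P₂`, `l ∈ [0, 1]`, applies.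
-/

open Set MeasureTheory

theorem Real.iInter_nonempty_or_exists_sSup_lt_sInf {ι : Type*} [Nonempty ι] {S : ι → Set ℝ}
    (hne : ∀ i, (S i).Nonempty) (hcpt : ∀ i, IsCompact (S i))
    (hconn : ∀ i, (S i).OrdConnected) :
    (⋂ i, S i).Nonempty ∨ ∃ i j, sSup (S i) < sInf (S j) := by
  refine or_iff_not_imp_right.2 fun h => ?_
  push Not at h
  inhabit ι
  have hbdd : BddAbove (range fun j => sInf (S j)) :=
    ⟨sSup (S default), by rintro _ ⟨j, rfl⟩; exact h default j⟩
  exact ⟨⨆ j, sInf (S j), mem_iInter.2 fun i => (hconn i).out ((hcpt i).sInf_mem (hne i))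
    ((hcpt i).sSup_mem (hne i)) ⟨le_ciSup hbdd i, ciSup_le (h i)⟩⟩

theorem IsPreconnected.exists_dist_lt {X : Type*} [PseudoMetricSpace X] {s A B : Set X}
    (hs : IsPreconnected s) (hsAB : s ⊆ A ∪ B) (hA : (s ∩ A).Nonempty) (hB : (s ∩ B).Nonempty)
    {η : ℝ} (hη : 0 < η) : ∃ x ∈ A, ∃ y ∈ B, dist x y < η := by
  have hA' := Metric.self_subset_thickening (half_pos hη) A
  have hB' := Metric.self_subset_thickening (half_pos hη) B
  obtain ⟨z, -, hzA, hzB⟩ := hs _ _ Metric.isOpen_thickening Metric.isOpen_thickening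
    (hsAB.trans (union_subset_union hA' hB')) (hA.mono (inter_subset_inter_right s hA'))
    (hB.mono (inter_subset_inter_right s hB'))
  obtain ⟨x, hx, hzx⟩ := Metric.mem_thickening_iff.1 hzA
  obtain ⟨y, hy, hzy⟩ := Metric.mem_thickening_iff.1 hzB
  exact ⟨x, hx, y, hy, (dist_triangle_left x y z).trans_lt (by linarith)⟩

/-- The two-function step of Komiya's proof of Sion's minimax theorem. -/
theorem ConvexOn.exists_forall_lt_mix {K : Set ℝ} {g₁ g₂ : ℝ → ℝ}
    (h₁ : ConvexOn ℝ K g₁) (h₂ : ConvexOn ℝ K g₂) {C : ℝ} (hC : ∀ t ∈ K, |g₁ t - g₂ t| ≤ C)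
    {β γ c : ℝ} (hβγ : β < γ) (hc₁ : ∀ t ∈ K, g₁ t ≤ γ → t < c)
    (hc₂ : ∀ t ∈ K, g₂ t ≤ γ → c < t) :
    ∃ l ∈ Icc (0 : ℝ) 1, ∀ t ∈ K, β < l * g₁ t + (1 - l) * g₂ t := by
  by_contra! hmix
  set g : ℝ → ℝ → ℝ := fun l t => l * g₁ t + (1 - l) * g₂ t with hg
  have hgc : ∀ l ∈ Icc (0 : ℝ) 1, c ∈ K → γ < g l c := fun l hl hc =>
    convex_Ioi γ (lt_of_not_ge fun h => (hc₁ c hc h).false)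
      (lt_of_not_ge fun h => (hc₂ c hc h).false) hl.1 (sub_nonneg.2 hl.2) (by ring)
  -- each mixture dips below `β` on one side of `c`, never at `c`; connectedness of `[0, 1]`
  -- yields close weights dipping on opposite sides, and convexity then fails at `c`
  set A := {l ∈ Icc (0 : ℝ) 1 | ∃ t ∈ K, t < c ∧ g l t ≤ β}
  set B := {l ∈ Icc (0 : ℝ) 1 | ∃ t ∈ K, c < t ∧ g l t ≤ β}
  have hcover : Icc (0 : ℝ) 1 ⊆ A ∪ B := by
    intro l hl
    obtain ⟨t, htK, ht⟩ := hmix l hl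
    rcases lt_trichotomy t c with htc | rfl | hct
    · exact Or.inl ⟨hl, t, htK, htc, ht⟩
    · exact absurd (hgc l hl htK) (by linarith)
    · exact Or.inr ⟨hl, t, htK, hct, ht⟩
  have h1A : (1 : ℝ) ∈ A := by
    obtain ⟨t, htK, ht⟩ := hmix 1 (right_mem_Icc.2 zero_le_one)
    simp only [one_mul, sub_self, zero_mul, add_zero] at ht
    exact ⟨right_mem_Icc.2 zero_le_one, t, htK, hc₁ t htK (by linarith), by simpa [hg] using ht⟩
  have h0B : (0 : ℝ) ∈ B := by
    obtain ⟨t, htK, ht⟩ := hmix 0 (left_mem_Icc.2 zero_le_one)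
    simp only [zero_mul, sub_zero, one_mul, zero_add] at ht
    exact ⟨left_mem_Icc.2 zero_le_one, t, htK, hc₂ t htK (by linarith), by simpa [hg] using ht⟩
  have hη : 0 < (γ - β) / (|C| + 1) := div_pos (sub_pos.2 hβγ) (by positivity)
  obtain ⟨l, ⟨hl, t₁, ht₁K, ht₁c, ht₁⟩, m, ⟨-, t₂, ht₂K, hct₂, ht₂⟩, hlm⟩ :=
    isPreconnected_Icc.exists_dist_lt hcover ⟨1, right_mem_Icc.2 zero_le_one, h1A⟩
      ⟨0, left_mem_Icc.2 zero_le_one, h0B⟩ hη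
  have hcseg : c ∈ segment ℝ t₁ t₂ :=
    (segment_eq_Icc (ht₁c.trans hct₂).le).symm ▸ ⟨ht₁c.le, hct₂.le⟩
  have hcK : c ∈ K := h₁.1.segment_subset ht₁K ht₂K hcseg
  have hconv : ConvexOn ℝ K (g l) := (h₁.smul hl.1).add (h₂.smul (sub_nonneg.2 hl.2))
  have hshift : g l t₂ ≤ β + |l - m| * |C| := by
    have : g l t₂ - g m t₂ = (l - m) * (g₁ t₂ - g₂ t₂) := by ring
    have := (le_abs_self _).trans ((abs_mul (l - m) _).trans_le
      (mul_le_mul_of_nonneg_left ((hC t₂ ht₂K).trans (le_abs_self C)) (abs_nonneg _)))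
    linarith
  have hlm' : |l - m| * |C| < γ - β := by
    rw [Real.dist_eq, lt_div_iff₀ (by positivity)] at hlm
    nlinarith [abs_nonneg (l - m), abs_nonneg C]
  exact (hgc l hl hcK).not_ge ((hconv.le_on_segment ht₁K ht₂K hcseg).trans
    (max_le (by linarith) (by linarith)))

theorem IsCompact.exists_forall_le_of_forall_exists_le {ι : Type*} [Nonempty ι] {K : Set ℝ}
    (hK : IsCompact K) {F : ι → ℝ → ℝ} (hconv : ∀ i, ConvexOn ℝ K (F i))
    (hcont : ∀ i, ContinuousOn (F i) K)
    (hmix : ∀ i j, ∀ l ∈ Icc (0 : ℝ) 1, ∃ k, ∀ t ∈ K, l * F i t + (1 - l) * F j t ≤ F k t)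
    {β γ : ℝ} (hβγ : β < γ) (hwit : ∀ i, ∃ t ∈ K, F i t ≤ β) :
    ∃ t ∈ K, ∀ i, F i t ≤ γ := by
  set S : ι → Set ℝ := fun i => {t ∈ K | F i t ≤ γ}
  have hne : ∀ i, (S i).Nonempty := fun i =>
    let ⟨t, htK, ht⟩ := hwit i; ⟨t, htK, ht.trans hβγ.le⟩
  have hcpt : ∀ i, IsCompact (S i) := fun i =>
    hK.of_isClosed_subset ((hcont i).preimage_isClosed_of_isClosed hK.isClosed isClosed_Iic)
      inter_subset_left
  rcases Real.iInter_nonempty_or_exists_sSup_lt_sInf hne hcpt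
    fun i => ((hconv i).convex_le γ).ordConnected with ⟨t, ht⟩ | ⟨i, j, hij⟩
  · exact ⟨t, (mem_iInter.1 ht (Classical.arbitrary ι)).1, fun i => (mem_iInter.1 ht i).2⟩
  obtain ⟨C, hC⟩ := hK.exists_bound_of_continuousOn ((hcont i).sub (hcont j))
  obtain ⟨l, hl, hlt⟩ := (hconv i).exists_forall_lt_mix (hconv j) (C := C)
    (fun t ht => Real.norm_eq_abs _ ▸ hC t ht) hβγ (c := (sSup (S i) + sInf (S j)) / 2)
    (fun t htK ht => by linarith [le_csSup (hcpt i).bddAbove ⟨htK, ht⟩])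
    (fun t htK ht => by linarith [csInf_le (hcpt j).bddBelow ⟨htK, ht⟩])
  obtain ⟨k, hk⟩ := hmix i j l hl
  obtain ⟨t, htK, ht⟩ := hwit k
  exact ((hlt t htK).not_ge ((hk t htK).trans ht)).elim

/-- Sion's minimax theorem for a family of convex functions on `ℝ` that is concave-like in the
index and can be restricted to a compact set `K` of values of the variable. -/
theorem Real.iSup_iInf_eq_iInf_iSup_of_convexOn {ι : Type*} {K : Set ℝ} (hK : IsCompact K)
    {F : ι → ℝ → ℝ} (hconv : ∀ i, ConvexOn ℝ K (F i)) (hcont : ∀ i, ContinuousOn (F i) K)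
    (hmix : ∀ i j, ∀ l ∈ Icc (0 : ℝ) 1, ∃ k, ∀ t ∈ K, l * F i t + (1 - l) * F j t ≤ F k t)
    (hretract : ∀ t, ∃ s ∈ K, ∀ i, F i s ≤ F i t)
    (hbdd : ∀ t, BddAbove (range fun i => F i t)) :
    ⨆ i, ⨅ t, F i t = ⨅ t, ⨆ i, F i t := by
  rcases isEmpty_or_nonempty ι with hι | hι
  · simp [Real.iSup_of_isEmpty]
  have hbddBelow : ∀ i, BddBelow (range (F i)) := fun i => by
    obtain ⟨m, hm⟩ := hK.bddBelow_image (hcont i)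
    refine ⟨m, ?_⟩
    rintro _ ⟨t, rfl⟩
    obtain ⟨s, hsK, hs⟩ := hretract t
    exact (hm ⟨s, hsK, rfl⟩).trans (hs i)
  have hle : ∀ i t, ⨅ t', F i t' ≤ ⨆ i', F i' t := fun i t =>
    (ciInf_le (hbddBelow i) t).trans (le_ciSup (hbdd t) i)
  refine le_antisymm (ciSup_le fun i => le_ciInf (hle i)) (le_of_not_gt fun hlt => ?_)
  obtain ⟨γ, hγ, hγlt⟩ := exists_between hlt
  obtain ⟨β, hβ, hβγ⟩ := exists_between hγ
  have hwit : ∀ i, ∃ t ∈ K, F i t ≤ β := fun i => by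
    obtain ⟨t, ht⟩ := exists_lt_of_ciInf_lt ((le_ciSup (f := fun i => ⨅ t, F i t)
      ⟨_, by rintro _ ⟨i, rfl⟩; exact hle i 0⟩ i).trans_lt hβ)
    obtain ⟨s, hsK, hs⟩ := hretract t
    exact ⟨s, hsK, (hs i).trans ht.le⟩
  obtain ⟨t, -, ht⟩ := hK.exists_forall_le_of_forall_exists_le hconv hcont hmix hβγ hwit
  have hbddBelow' : BddBelow (range fun t => ⨆ i, F i t) := by
    obtain ⟨m, hm⟩ := hbddBelow (Classical.arbitrary ι)
    exact ⟨m, by rintro _ ⟨t, rfl⟩; exact (hm ⟨t, rfl⟩).trans (le_ciSup (hbdd t) _)⟩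
  exact hγlt.not_ge ((ciInf_le hbddBelow' t).trans (ciSup_le ht))

section

variable {Ξ : Type*} [MeasurableSpace Ξ]

/-- `l P + (1 - l) Q`; outside `[0, 1]`, `ENNReal.ofReal` truncates the negative weight to `0`. -/
noncomputable def MeasureTheory.Measure.mixture (l : ℝ) (P Q : Measure Ξ) : Measure Ξ :=
  ENNReal.ofReal l • P + ENNReal.ofReal (1 - l) • Q

namespace MeasureTheory.Measure

variable {P Q : Measure Ξ} {l : ℝ}

theorem isProbabilityMeasure_mixture [IsProbabilityMeasure P] [IsProbabilityMeasure Q]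
    (hl : l ∈ Icc (0 : ℝ) 1) : IsProbabilityMeasure (P.mixture l Q) := by
  constructor
  simp only [mixture, add_apply, smul_apply, measure_univ, smul_eq_mul, mul_one]
  rw [← ENNReal.ofReal_add hl.1 (sub_nonneg.2 hl.2), add_sub_cancel, ENNReal.ofReal_one]

theorem integral_mixture {E : Type*} [NormedAddCommGroup E] [NormedSpace ℝ E] {g : Ξ → E}
    (hl : l ∈ Icc (0 : ℝ) 1) (hP : Integrable g P) (hQ : Integrable g Q) :
    ∫ x, g x ∂(P.mixture l Q) = l • ∫ x, g x ∂P + (1 - l) • ∫ x, g x ∂Q := by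
  rw [mixture, integral_add_measure (hP.smul_measure ENNReal.ofReal_ne_top)
    (hQ.smul_measure ENNReal.ofReal_ne_top), integral_smul_measure, integral_smul_measure,
    ENNReal.toReal_ofReal hl.1, ENNReal.toReal_ofReal (sub_nonneg.2 hl.2)]

theorem norm_integral_mixture_sub_le {E : Type*} [NormedAddCommGroup E] [NormedSpace ℝ E]
    {g : Ξ → E} {c : E} {ε : ℝ} (hl : l ∈ Icc (0 : ℝ) 1) (hP : Integrable g P)
    (hQ : Integrable g Q) (hPε : ‖∫ x, g x ∂P - c‖ ≤ ε) (hQε : ‖∫ x, g x ∂Q - c‖ ≤ ε) :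
    ‖∫ x, g x ∂(P.mixture l Q) - c‖ ≤ ε := by
  rw [integral_mixture hl hP hQ, ← mem_closedBall_iff_norm]
  exact convex_closedBall c ε (mem_closedBall_iff_norm.2 hPε) (mem_closedBall_iff_norm.2 hQε)
    hl.1 (sub_nonneg.2 hl.2) (add_sub_cancel l 1)

end MeasureTheory.Measure

theorem MeasureTheory.Integrable.pos_part_add_const {f : Ξ → ℝ} {P : Measure Ξ}
    [IsFiniteMeasure P] (hf : Integrable f P) (t : ℝ) :
    Integrable (fun ξ => max (f ξ + t) 0) P :=
  (hf.add (integrable_const t)).pos_part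

noncomputable def cvarObjective (f : Ξ → ℝ) (α : ℝ) (P : Measure Ξ) (t : ℝ) : ℝ :=
  ∫ ξ, max (f ξ + t) 0 ∂P - t * α

section CVaR

variable {f : Ξ → ℝ} {α : ℝ} {P Q : Measure Ξ}

theorem convexOn_cvarObjective [IsFiniteMeasure P] (hf : Integrable f P) :
    ConvexOn ℝ univ (cvarObjective f α P) := by
  refine (integral_convexOn_of_integrand_ae convex_univ (ae_of_all _ fun ξ => ?_)
    fun t _ => hf.pos_part_add_const t).sub ((LinearMap.mulRight ℝ α).concaveOn convex_univ)
  exact ((convexOn_const (f ξ) convex_univ).add (convexOn_id convex_univ)).sup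
    (convexOn_const 0 convex_univ)

theorem cvarObjective_mixture [IsFiniteMeasure P] [IsFiniteMeasure Q] (hP : Integrable f P)
    (hQ : Integrable f Q) {l : ℝ} (hl : l ∈ Icc (0 : ℝ) 1) (t : ℝ) :
    cvarObjective f α (P.mixture l Q) t
      = l * cvarObjective f α P t + (1 - l) * cvarObjective f α Q t := by
  rw [cvarObjective, Measure.integral_mixture hl (hP.pos_part_add_const t)
    (hQ.pos_part_add_const t), cvarObjective, cvarObjective, smul_eq_mul, smul_eq_mul]
  ring

theorem cvarObjective_le [IsProbabilityMeasure P] {M : ℝ} (hf : ∀ ξ, f ξ ≤ M) (t : ℝ) :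
    cvarObjective f α P t ≤ max (M + t) 0 - t * α := by
  have : ∫ ξ, max (f ξ + t) 0 ∂P ≤ ∫ _ξ, max (M + t) 0 ∂P :=
    integral_mono_of_nonneg (ae_of_all _ fun ξ => le_max_right _ _) (integrable_const _)
      (ae_of_all _ fun ξ => max_le_max_right 0 (by linarith [hf ξ]))
  simpa [cvarObjective] using this

theorem cvarObjective_of_nonpos {t : ℝ} (h : ∀ ξ, f ξ + t ≤ 0) :
    cvarObjective f α P t = -(t * α) := by
  simp [cvarObjective, max_eq_right (h _)]

theorem cvarObjective_of_nonneg [IsProbabilityMeasure P] (hf : Integrable f P) {t : ℝ}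
    (h : ∀ ξ, 0 ≤ f ξ + t) : cvarObjective f α P t = ∫ ξ, f ξ ∂P + t * (1 - α) := by
  simp only [cvarObjective, max_eq_left (h _)]
  rw [integral_add hf (integrable_const t)]
  simp only [integral_const, probReal_univ, one_smul]
  ring

theorem exists_mem_Icc_cvarObjective_le (hα : α ∈ Icc (0 : ℝ) 1) {M : ℝ} (hM : 0 ≤ M)
    (hf : ∀ ξ, |f ξ| ≤ M) (t : ℝ) : ∃ s ∈ Icc (-M) M, ∀ P : Measure Ξ, IsProbabilityMeasure P →
      Integrable f P → cvarObjective f α P s ≤ cvarObjective f α P t := by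
  have hlo : ∀ ξ, -M ≤ f ξ := fun ξ => (abs_le.1 (hf ξ)).1
  have hhi : ∀ ξ, f ξ ≤ M := fun ξ => (abs_le.1 (hf ξ)).2
  rcases le_or_gt t (-M) with ht | ht
  · refine ⟨-M, ⟨le_rfl, by linarith⟩, fun P _ _ => ?_⟩
    rw [cvarObjective_of_nonpos fun ξ => by linarith [hhi ξ],
      cvarObjective_of_nonpos fun ξ => by linarith [hhi ξ]]
    nlinarith [hα.1]
  rcases le_or_gt M t with ht' | ht'
  · refine ⟨M, ⟨by linarith, le_rfl⟩, fun P _ hfP => ?_⟩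
    rw [cvarObjective_of_nonneg hfP fun ξ => by linarith [hlo ξ],
      cvarObjective_of_nonneg hfP fun ξ => by linarith [hlo ξ]]
    nlinarith [hα.2]
  · exact ⟨t, ⟨ht.le, ht'.le⟩, fun _ _ _ => le_rfl⟩

theorem iSup_iInf_cvarObjective_eq_iInf_iSup (hα : α ∈ Icc (0 : ℝ) 1) (hfm : Measurable f)
    {M : ℝ} (hM : 0 ≤ M) (hfb : ∀ ξ, |f ξ| ≤ M) {S : Set (Measure Ξ)}
    (hS : ∀ P ∈ S, IsProbabilityMeasure P)
    (hS_mix : ∀ P ∈ S, ∀ Q ∈ S, ∀ l ∈ Icc (0 : ℝ) 1, P.mixture l Q ∈ S) :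
    ⨆ P : S, ⨅ t, cvarObjective f α P t = ⨅ t, ⨆ P : S, cvarObjective f α P t := by
  have hfint : ∀ P : S, Integrable f P := fun P =>
    have := hS P P.2; .of_bound hfm.aestronglyMeasurable M (ae_of_all _ hfb)
  have hconv : ∀ P : S, ConvexOn ℝ univ (cvarObjective f α P) := fun P =>
    have := hS P P.2; convexOn_cvarObjective (hfint P)
  have hmix : ∀ P Q : S, ∀ l ∈ Icc (0 : ℝ) 1, ∃ R : S, ∀ t ∈ Icc (-M) M,
      l * cvarObjective f α P t + (1 - l) * cvarObjective f α Q t ≤ cvarObjective f α R t :=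
    fun P Q l hl => have := hS P P.2; have := hS Q Q.2
      ⟨⟨_, hS_mix P P.2 Q Q.2 l hl⟩, fun t _ => (cvarObjective_mixture (hfint P) (hfint Q) hl t).ge⟩
  have hretract : ∀ t, ∃ s ∈ Icc (-M) M, ∀ P : S,
      cvarObjective f α P s ≤ cvarObjective f α P t := fun t =>
    let ⟨s, hs, hle⟩ := exists_mem_Icc_cvarObjective_le hα hM hfb t
    ⟨s, hs, fun P => hle P (hS P P.2) (hfint P)⟩
  have hbdd : ∀ t, BddAbove (range fun P : S => cvarObjective f α P t) := fun t =>
    ⟨_, by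
      rintro _ ⟨P, rfl⟩
      have := hS P P.2
      exact cvarObjective_le (fun ξ => (abs_le.1 (hfb ξ)).2) t⟩
  exact Real.iSup_iInf_eq_iInf_iSup_of_convexOn isCompact_Icc
    (fun P => (hconv P).subset (subset_univ _) (convex_Icc _ _))
    (fun P => ((hconv P).continuousOn isOpen_univ).mono (subset_univ _)) hmix hretract hbdd

end CVaR

end

theorem minimax_exchange_DR_CVaR_general
    {Ξ : Type*} [MetricSpace Ξ] [CompactSpace Ξ] [MeasurableSpace Ξ] [BorelSpace Ξ]
    {H : Type*} [NormedAddCommGroup H] [InnerProductSpace ℝ H]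
    (φ : Ξ → H) (hφ : Continuous φ)
    {N : ℕ} (hN : 0 < N) (ξs : Fin N → Ξ)
    (ε : ℝ) (α : ℝ) (hα : α ∈ Set.Ioo (0 : ℝ) 1)
    (f : Ξ → ℝ) (hfm : Measurable f) (M : ℝ) (hfb : ∀ ξ, |f ξ| ≤ M) :
    sSup {r : ℝ | ∃ P : Measure Ξ, IsProbabilityMeasure P ∧
        ‖(∫ ξ, φ ξ ∂P) - (N : ℝ)⁻¹ • ∑ i, φ (ξs i)‖ ≤ ε ∧
        r = ⨅ t : ℝ, (∫ ξ, max (f ξ + t) 0 ∂P - t * α)}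
      = ⨅ t : ℝ, sSup {r : ℝ | ∃ P : Measure Ξ, IsProbabilityMeasure P ∧
          ‖(∫ ξ, φ ξ ∂P) - (N : ℝ)⁻¹ • ∑ i, φ (ξs i)‖ ≤ ε ∧
          r = ∫ ξ, max (f ξ + t) 0 ∂P - t * α} := by
  set S := {P : Measure Ξ | IsProbabilityMeasure P ∧
    ‖(∫ ξ, φ ξ ∂P) - (N : ℝ)⁻¹ • ∑ i, φ (ξs i)‖ ≤ ε}
  have hrange : ∀ g : Measure Ξ → ℝ, {r : ℝ | ∃ P : Measure Ξ, IsProbabilityMeasure P ∧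
      ‖(∫ ξ, φ ξ ∂P) - (N : ℝ)⁻¹ • ∑ i, φ (ξs i)‖ ≤ ε ∧ r = g P} = range fun P : S => g P :=
    fun g => by ext r; simp [S, eq_comm, and_assoc]
  have hφint : ∀ (P : Measure Ξ) [IsFiniteMeasure P], Integrable φ P := fun P _ =>
    hφ.integrable_of_hasCompactSupport (.of_compactSpace φ)
  have hS_mix : ∀ P ∈ S, ∀ Q ∈ S, ∀ l ∈ Icc (0 : ℝ) 1, P.mixture l Q ∈ S := by
    rintro P ⟨hP, hPε⟩ Q ⟨hQ, hQε⟩ l hl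
    exact ⟨Measure.isProbabilityMeasure_mixture hl,
      Measure.norm_integral_mixture_sub_le hl (hφint P) (hφint Q) hPε hQε⟩
  simp only [hrange]
  exact iSup_iInf_cvarObjective_eq_iInf_iSup ⟨hα.1.le, hα.2.le⟩ hfm
    ((abs_nonneg _).trans (hfb (ξs ⟨0, hN⟩))) hfb (fun P hP => hP.1) hS_mix

/-- Minimax exchange for the distributionally robust CVaR (Lemma 1).
`f` plays the role of `f(x, ·)` for a fixed decision `x`, assumed Borel measurable
and bounded on the compact metric space `Ξ`; the MMD ambiguity set `𝒫` is the ball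
of radius `ε` around the empirical measure of the sample `ξs`, measured via the
kernel mean embeddings `∫ φ dP` and `(1/N) ∑ i, φ (ξs i)`. -/
theorem minimax_exchange_DR_CVaR
    {Ξ : Type*} [MetricSpace Ξ] [CompactSpace Ξ] [MeasurableSpace Ξ] [BorelSpace Ξ]
    {H : Type*} [NormedAddCommGroup H] [InnerProductSpace ℝ H] [CompleteSpace H]
    (φ : Ξ → H) (hφ : Continuous φ)
    {N : ℕ} (hN : 0 < N) (ξs : Fin N → Ξ)
    (ε : ℝ) (hε : 0 < ε) (α : ℝ) (hα : α ∈ Set.Ioo (0 : ℝ) 1)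
    (f : Ξ → ℝ) (hfm : Measurable f) (M : ℝ) (hfb : ∀ ξ, |f ξ| ≤ M) :
    sSup {r : ℝ | ∃ P : Measure Ξ, IsProbabilityMeasure P ∧
        ‖(∫ ξ, φ ξ ∂P) - (N : ℝ)⁻¹ • ∑ i, φ (ξs i)‖ ≤ ε ∧
        r = ⨅ t : ℝ, (∫ ξ, max (f ξ + t) 0 ∂P - t * α)}
      = ⨅ t : ℝ, sSup {r : ℝ | ∃ P : Measure Ξ, IsProbabilityMeasure P ∧
          ‖(∫ ξ, φ ξ ∂P) - (N : ℝ)⁻¹ • ∑ i, φ (ξs i)‖ ≤ ε ∧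
          r = ∫ ξ, max (f ξ + t) 0 ∂P - t * α} :=
  minimax_exchange_DR_CVaR_general φ hφ hN ξs ε α hα f hfm M hfb
end

section
/- Finite-sample guarantee for MMD-DRCCP constraint satisfaction (deterministic core of Proposition 3). Let P₀ be a probability measure on Ξ, let ξ_1,…,ξ_N ∈ Ξ with empirical measure P̂_N, and suppose φ is P₀-Bochner-integrable and f(x̂,·) : Ξ → ℝ is Borel measurable and bounded. Fix x̂, ĝ ∈ H, t̂ ∈ ℝ, α ∈ (0,1), ρ ≥ 0 and ℰ ≥ 0, and assume: (i) MMD(P₀, P̂_N) ≤ ρ; (ii) ∫ ( (f(x̂,ξ)+t̂)_+ − ⟨ĝ, φ(ξ)⟩_H ) dP₀(ξ) ≤ (1/N)∑_{i=1}^N ( (f(x̂,ξ_i)+t̂)_+ − ⟨ĝ, φ(ξ_i)⟩_H ) + ℰ; (iii) (f(x̂,ξ_i)+t̂)_+ ≤ ⟨ĝ, φ(ξ_i)⟩_H for every i = 1,…,N; and (iv) (1/N)∑_{i=1}^N ⟨ĝ, φ(ξ_i)⟩_H + ρ‖ĝ‖_H ≤ t̂α. Then CVaR_{1−α}^{P₀}[f(x̂,·)]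 ≤ ℰ. -/
open MeasureTheory RealInnerProductSpace

/-!
Evaluate the CVaR infimum at `t̂`. The integrand `(f + t̂)_+` is split as
`((f + t̂)_+ - ⟨ĝ, φ⟩) + ⟨ĝ, φ⟩`. By the gap bound (ii) and the sampled constraints (iii), the
first part has `P₀`-mean at most `ℰ`. The second part has mean `⟨ĝ, μ_{P₀}⟩`; by Cauchy–Schwarz
and the MMD bound (i) this is at most `⟨ĝ, μ_{P̂_N}⟩ + ρ‖ĝ‖`, which the risk constraint (iv)
bounds by `t̂α`.
-/

/-- The real infimum is `0` when unbounded below, so a nonnegative bound at one index suffices. -/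
lemma Real.iInf_le_of_le_of_nonneg {ι : Type*} {f : ι → ℝ} {a : ℝ} (i : ι) (hi : f i ≤ a)
    (ha : 0 ≤ a) : ⨅ j, f j ≤ a := by
  by_cases hf : BddBelow (Set.range f)
  · exact ciInf_le_of_le hf i hi
  · rwa [Real.iInf_of_not_bddBelow hf]

lemma real_inner_le_inner_add_mul_norm_of_norm_sub_le {H : Type*} [NormedAddCommGroup H]
    [InnerProductSpace ℝ H] {a b : H} {ρ : ℝ} (hab : ‖a - b‖ ≤ ρ) (g : H) :
    ⟪g, a⟫ ≤ ⟪g, b⟫ + ρ * ‖g‖ := by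
  have hcs : ⟪g, a - b⟫ ≤ ρ * ‖g‖ :=
    calc ⟪g, a - b⟫ ≤ ‖g‖ * ‖a - b‖ := real_inner_le_norm _ _
      _ ≤ ‖g‖ * ρ := mul_le_mul_of_nonneg_left hab (norm_nonneg _)
      _ = ρ * ‖g‖ := mul_comm _ _
  rw [inner_sub_right] at hcs
  linarith

lemma integrable_max_add_const_zero_of_abs_le {Ξ : Type*} [MeasurableSpace Ξ] {P : Measure Ξ}
    [IsFiniteMeasure P] {f : Ξ → ℝ} (hfm : Measurable f) {M : ℝ} (hfb : ∀ ξ, |f ξ| ≤ M)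
    (t : ℝ) : Integrable (fun ξ => max (f ξ + t) 0) P :=
  (Integrable.of_bound hfm.aestronglyMeasurable M (.of_forall hfb)).add
    (integrable_const t) |>.pos_part

theorem finite_sample_guarantee_CVaR_general
    {Ξ : Type*} [MeasurableSpace Ξ]
    {H : Type*} [NormedAddCommGroup H] [InnerProductSpace ℝ H] [CompleteSpace H]
    (φ : Ξ → H)
    (P₀ : Measure Ξ) [IsProbabilityMeasure P₀] (hφ : Integrable φ P₀)
    {N : ℕ} (ξs : Fin N → Ξ)
    (f : Ξ → ℝ) (hfm : Measurable f) (M : ℝ) (hfb : ∀ ξ, |f ξ| ≤ M)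
    (ghat : H) (that α ρ Err : ℝ)
    (hErr : 0 ≤ Err)
    -- (i) the ambiguity radius dominates the estimation error
    (hMMD : ‖(∫ ξ, φ ξ ∂P₀) - (N : ℝ)⁻¹ • ∑ i, φ (ξs i)‖ ≤ ρ)
    -- (ii) population–empirical gap bound
    (hgap : ∫ ξ, (max (f ξ + that) 0 - ⟪ghat, φ ξ⟫) ∂P₀
        ≤ (N : ℝ)⁻¹ * ∑ i, (max (f (ξs i) + that) 0 - ⟪ghat, φ (ξs i)⟫) + Err)
    -- (iii) sampled majorization constraints
    (hsample : ∀ i, max (f (ξs i) + that) 0 ≤ ⟪ghat, φ (ξs i)⟫)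
    -- (iv) risk constraint
    (hrisk : (N : ℝ)⁻¹ * ∑ i, ⟪ghat, φ (ξs i)⟫ + ρ * ‖ghat‖ ≤ that * α) :
    (⨅ t : ℝ, (∫ ξ, max (f ξ + t) 0 ∂P₀ - t * α)) ≤ Err := by
  refine Real.iInf_le_of_le_of_nonneg that ?_ hErr
  have hempirical : (N : ℝ)⁻¹ * ∑ i, (max (f (ξs i) + that) 0 - ⟪ghat, φ (ξs i)⟫) ≤ 0 :=
    mul_nonpos_of_nonneg_of_nonpos (by positivity)
      (Finset.sum_nonpos fun i _ => sub_nonpos.mpr (hsample i))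
  have hmean : ∫ ξ, ⟪ghat, φ ξ⟫ ∂P₀ ≤ (N : ℝ)⁻¹ * ∑ i, ⟪ghat, φ (ξs i)⟫ + ρ * ‖ghat‖ := by
    rw [integral_inner hφ, ← inner_sum, ← real_inner_smul_right]
    exact real_inner_le_inner_add_mul_norm_of_norm_sub_le hMMD ghat
  rw [integral_sub (integrable_max_add_const_zero_of_abs_le hfm hfb that)
    (hφ.const_inner ghat)] at hgap
  linarith

/-- Finite-sample guarantee for MMD-DRCCP constraint satisfaction
(deterministic core of Proposition 3).
`f` plays the role of `f(x̂, ·)` for the computed solution `x̂`, `ghat` of `ĝ`,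
`that` of `t̂` and `Err` of the error level `ℰ`.
`CVaR_{1-α}^{P₀}[f] = ⨅ t, (E_{P₀}[(f+t)_+] - tα)`; `MMD(P₀, P̂_N)` is
`‖∫ φ ∂P₀ - (1/N) ∑ i, φ (ξs i)‖`. -/
theorem finite_sample_guarantee_CVaR
    {Ξ : Type*} [MetricSpace Ξ] [MeasurableSpace Ξ] [BorelSpace Ξ]
    {H : Type*} [NormedAddCommGroup H] [InnerProductSpace ℝ H] [CompleteSpace H]
    (φ : Ξ → H)
    (P₀ : Measure Ξ) [IsProbabilityMeasure P₀] (hφ : Integrable φ P₀)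
    {N : ℕ} (hN : 0 < N) (ξs : Fin N → Ξ)
    (f : Ξ → ℝ) (hfm : Measurable f) (M : ℝ) (hfb : ∀ ξ, |f ξ| ≤ M)
    (ghat : H) (that α ρ Err : ℝ)
    (hα : α ∈ Set.Ioo (0 : ℝ) 1) (hρ : 0 ≤ ρ) (hErr : 0 ≤ Err)
    -- (i) the ambiguity radius dominates the estimation error
    (hMMD : ‖(∫ ξ, φ ξ ∂P₀) - (N : ℝ)⁻¹ • ∑ i, φ (ξs i)‖ ≤ ρ)
    -- (ii) population–empirical gap bound
    (hgap : ∫ ξ, (max (f ξ + that) 0 - ⟪ghat, φ ξ⟫) ∂P₀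
        ≤ (N : ℝ)⁻¹ * ∑ i, (max (f (ξs i) + that) 0 - ⟪ghat, φ (ξs i)⟫) + Err)
    -- (iii) sampled majorization constraints
    (hsample : ∀ i, max (f (ξs i) + that) 0 ≤ ⟪ghat, φ (ξs i)⟫)
    -- (iv) risk constraint
    (hrisk : (N : ℝ)⁻¹ * ∑ i, ⟪ghat, φ (ξs i)⟫ + ρ * ‖ghat‖ ≤ that * α) :
    (⨅ t : ℝ, (∫ ξ, max (f ξ + t) 0 ∂P₀ - t * α)) ≤ Err :=
  finite_sample_guarantee_CVaR_general φ P₀ hφ ξs f hfm M hfb ghat that α ρ Err hErr hMMD hgap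
    hsample hrisk
end

section
/- Finite-sample chance-constraint satisfaction (Corollary, deterministic core). Under the hypotheses (i)–(iv) of the deterministic finite-sample guarantee — namely MMD(P₀, P̂_N) ≤ ρ; the population–empirical gap bound ∫((f(x̂,ξ)+t̂)_+ − ⟨ĝ, φ(ξ)⟩_H) dP₀ ≤ (1/N)∑_i ((f(x̂,ξ_i)+t̂)_+ − ⟨ĝ, φ(ξ_i)⟩_H) + ℰ; the sampled constraints (f(x̂,ξ_i)+t̂)_+ ≤ ⟨ĝ, φ(ξ_i)⟩_H for all i; and the risk constraint (1/N)∑_i ⟨ĝ, φ(ξ_i)⟩_H + ρ‖ĝ‖_H ≤ t̂α — the solution x̂ satisfies the chance constraint up to error ℰ/α: P₀{ ξ ∈ Ξ : f(x̂,ξ) ≤ ℰ/α } ≥ 1 − α. -/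
/-!
Write `h = (f + t̂)₊`. The sampled constraints make the empirical part of the gap bound
nonpositive, so `∫ h dP₀ ≤ ∫ ⟪ĝ, φ⟫ dP₀ + ℰ`. Moving the integral inside the inner product,
`∫ ⟪ĝ, φ⟫ dP₀ = ⟪ĝ, μ_{P₀}⟫ ≤ ⟪ĝ, μ_{P̂_N}⟫ + ρ‖ĝ‖ ≤ t̂α` by the MMD bound and the risk
constraint. Hence `∫ (f + t̂)₊ dP₀ ≤ α (t̂ + ℰ/α)`, and Markov's inequality for `h` at level
`t̂ + ℰ/α` bounds `P₀ {f > ℰ/α}` by `α`.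
-/

open MeasureTheory RealInnerProductSpace

section Markov

variable {Ω : Type*} [MeasurableSpace Ω] {μ : Measure Ω}

theorem measureReal_lt_le_of_integral_le_mul [IsFiniteMeasure μ] {X : Ω → ℝ} (hX : 0 ≤ X)
    (hXi : Integrable X μ) {α c : ℝ} (hα : 0 ≤ α) (hc : 0 ≤ c) (hint : ∫ ω, X ω ∂μ ≤ α * c) :
    μ.real {ω | c < X ω} ≤ α := by
  rcases hc.eq_or_lt with rfl | hc
  · -- Markov's inequality is empty at level `0`; there `∫ X = 0` forces `X = 0` a.e.
    have hX0 : X =ᵐ[μ] 0 := (integral_eq_zero_iff_of_nonneg hX hXi).mp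
      (le_antisymm (by simpa using hint) (integral_nonneg hX))
    have hnull : μ {ω | 0 < X ω} = 0 :=
      measure_mono_null (fun ω hω => ne_of_gt hω) (ae_iff.mp hX0)
    simpa [measureReal_def, hnull] using hα
  · have hmarkov := mul_meas_ge_le_integral_of_nonneg (ae_of_all μ hX) hXi c
    calc μ.real {ω | c < X ω} ≤ μ.real {ω | c ≤ X ω} :=
          measureReal_mono fun ω (hω : c < X ω) => hω.le
      _ ≤ α := le_of_mul_le_mul_left (by linarith) hc

theorem measureReal_div_lt_le_of_integral_posPart_le [IsFiniteMeasure μ] {Y : Ω → ℝ}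
    (hY : Integrable Y μ) {t α E : ℝ} (hα : 0 < α)
    (hint : ∫ ω, max (Y ω + t) 0 ∂μ ≤ t * α + E) :
    μ.real {ω | E / α < Y ω} ≤ α := by
  set c := t + E / α with hc_def
  have hX : 0 ≤ fun ω => max (Y ω + t) 0 := fun ω => le_max_right _ _
  have hint' : ∫ ω, max (Y ω + t) 0 ∂μ ≤ α * c := by
    have : α * c = t * α + E := by rw [hc_def]; field_simp
    linarith
  have hc : 0 ≤ c := nonneg_of_mul_nonneg_right ((integral_nonneg hX).trans hint') hα
  calc μ.real {ω | E / α < Y ω} ≤ μ.real {ω | c < max (Y ω + t) 0} :=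
        measureReal_mono fun ω (hω : E / α < Y ω) =>
          lt_max_of_lt_left (show c < Y ω + t by linarith)
    _ ≤ α := measureReal_lt_le_of_integral_le_mul hX (hY.add (integrable_const t)).pos_part
        hα.le hc hint'

end Markov

theorem inner_le_inner_add_mul_norm_of_norm_sub_le {H : Type*} [NormedAddCommGroup H]
    [InnerProductSpace ℝ H] (g : H) {x y : H} {ρ : ℝ} (hxy : ‖x - y‖ ≤ ρ) :
    ⟪g, x⟫ ≤ ⟪g, y⟫ + ρ * ‖g‖ := by
  have : ⟪g, x - y⟫ ≤ ‖g‖ * ρ :=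
    (real_inner_le_norm g _).trans (mul_le_mul_of_nonneg_left hxy (norm_nonneg g))
  rw [inner_sub_right] at this
  linarith

theorem finite_sample_guarantee_chance_constraint_general
    {Ξ : Type*} [MeasurableSpace Ξ]
    {H : Type*} [NormedAddCommGroup H] [InnerProductSpace ℝ H] [CompleteSpace H]
    (φ : Ξ → H)
    (P₀ : Measure Ξ) [IsProbabilityMeasure P₀] (hφ : Integrable φ P₀)
    {N : ℕ} (ξs : Fin N → Ξ)
    (f : Ξ → ℝ) (hfm : Measurable f) (M : ℝ) (hfb : ∀ ξ, |f ξ| ≤ M)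
    (ghat : H) (that α ρ Err : ℝ)
    (hα : α ∈ Set.Ioo (0 : ℝ) 1)
    -- (i) the ambiguity radius dominates the estimation error
    (hMMD : ‖(∫ ξ, φ ξ ∂P₀) - (N : ℝ)⁻¹ • ∑ i, φ (ξs i)‖ ≤ ρ)
    -- (ii) population–empirical gap bound
    (hgap : ∫ ξ, (max (f ξ + that) 0 - ⟪ghat, φ ξ⟫) ∂P₀
        ≤ (N : ℝ)⁻¹ * ∑ i, (max (f (ξs i) + that) 0 - ⟪ghat, φ (ξs i)⟫) + Err)
    -- (iii) sampled majorization constraints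
    (hsample : ∀ i, max (f (ξs i) + that) 0 ≤ ⟪ghat, φ (ξs i)⟫)
    -- (iv) risk constraint
    (hrisk : (N : ℝ)⁻¹ * ∑ i, ⟪ghat, φ (ξs i)⟫ + ρ * ‖ghat‖ ≤ that * α) :
    1 - α ≤ (P₀ {ξ : Ξ | f ξ ≤ Err / α}).toReal := by
  have hf : Integrable f P₀ := .of_bound hfm.aestronglyMeasurable M
    (ae_of_all _ fun ξ => (Real.norm_eq_abs _).trans_le (hfb ξ))
  have hh : Integrable (fun ξ => max (f ξ + that) 0) P₀ := (hf.add (integrable_const that)).pos_part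
  have hempirical : (N : ℝ)⁻¹ * ∑ i, (max (f (ξs i) + that) 0 - ⟪ghat, φ (ξs i)⟫) ≤ 0 :=
    mul_nonpos_of_nonneg_of_nonpos (by positivity)
      (Finset.sum_nonpos fun i _ => sub_nonpos.mpr (hsample i))
  have hembedding : ∫ ξ, ⟪ghat, φ ξ⟫ ∂P₀ ≤ that * α := by
    rw [integral_inner hφ]
    have := inner_le_inner_add_mul_norm_of_norm_sub_le ghat hMMD
    rw [inner_smul_right, inner_sum] at this
    linarith
  have hcvar : ∫ ξ, max (f ξ + that) 0 ∂P₀ ≤ that * α + Err := by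
    rw [integral_sub hh (hφ.const_inner ghat)] at hgap
    linarith
  have htail := measureReal_div_lt_le_of_integral_posPart_le hf hα.1 hcvar
  have hcompl : {ξ | f ξ ≤ Err / α}ᶜ = {ξ | Err / α < f ξ} := by ext; simp
  rw [← hcompl, probReal_compl_eq_one_sub (measurableSet_le hfm measurable_const)] at htail
  rw [← measureReal_def]
  linarith

/-- Finite-sample chance-constraint satisfaction (Corollary, deterministic core).
`f` plays the role of `f(x̂, ·)` for the computed solution `x̂`, `ghat` of `ĝ`,
`that` of `t̂` and `Err` of the error level `ℰ`. Under hypotheses (i)–(iv) of the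
deterministic finite-sample guarantee, the chance constraint holds up to error
`Err / α`: `P₀ {ξ | f ξ ≤ Err / α} ≥ 1 - α`. -/
theorem finite_sample_guarantee_chance_constraint
    {Ξ : Type*} [MetricSpace Ξ] [MeasurableSpace Ξ] [BorelSpace Ξ]
    {H : Type*} [NormedAddCommGroup H] [InnerProductSpace ℝ H] [CompleteSpace H]
    (φ : Ξ → H)
    (P₀ : Measure Ξ) [IsProbabilityMeasure P₀] (hφ : Integrable φ P₀)
    {N : ℕ} (hN : 0 < N) (ξs : Fin N → Ξ)
    (f : Ξ → ℝ) (hfm : Measurable f) (M : ℝ) (hfb : ∀ ξ, |f ξ| ≤ M)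
    (ghat : H) (that α ρ Err : ℝ)
    (hα : α ∈ Set.Ioo (0 : ℝ) 1) (hρ : 0 ≤ ρ) (hErr : 0 ≤ Err)
    -- (i) the ambiguity radius dominates the estimation error
    (hMMD : ‖(∫ ξ, φ ξ ∂P₀) - (N : ℝ)⁻¹ • ∑ i, φ (ξs i)‖ ≤ ρ)
    -- (ii) population–empirical gap bound
    (hgap : ∫ ξ, (max (f ξ + that) 0 - ⟪ghat, φ ξ⟫) ∂P₀
        ≤ (N : ℝ)⁻¹ * ∑ i, (max (f (ξs i) + that) 0 - ⟪ghat, φ (ξs i)⟫) + Err)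
    -- (iii) sampled majorization constraints
    (hsample : ∀ i, max (f (ξs i) + that) 0 ≤ ⟪ghat, φ (ξs i)⟫)
    -- (iv) risk constraint
    (hrisk : (N : ℝ)⁻¹ * ∑ i, ⟪ghat, φ (ξs i)⟫ + ρ * ‖ghat‖ ≤ that * α) :
    1 - α ≤ (P₀ {ξ : Ξ | f ξ ≤ Err / α}).toReal :=
  finite_sample_guarantee_chance_constraint_general φ P₀ hφ ξs f hfm M hfb ghat that α ρ Err hα hMMD
    hgap hsample hrisk
end

section
/- Weak duality for the indicator (chance) constraint. Fix a decision x, points ξ_1,…,ξ_N ∈ Ξ, ε > 0, and suppose f(x,·) : Ξ → ℝ is Borel measurable. Suppose g₀ ∈ ℝ and g ∈ H satisfy 𝟙(f(x,ξ) > 0) ≤ g₀ + ⟨g, φ(ξ)⟩_H for every ξ ∈ Ξ. Then for every probability measure P on Ξ with φ P-Bochner-integrable and MMD(P, P̂_N) ≤ ε, one has P{ξ : f(x,ξ) > 0} ≤ g₀ + (1/N)∑_{i=1}^N ⟨g, φ(ξ_i)⟩_H + ε‖g‖_H. In particular, if g₀ + (1/N)∑_{i=1}^N ⟨g, φ(ξ_i)⟩_H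 + ε‖g‖_H ≤ α, then P{ξ : f(x,ξ) ≤ 0} ≥ 1 − α for every such P. -/
/-! Integrating the pointwise majorant `𝟙_{f > 0} ≤ g₀ + ⟪g, φ ·⟫` against `P` bounds
`P {f > 0}` by `g₀ + ⟪g, μ_P⟫`, since integration commutes with the continuous functional
`⟪g, ·⟫`. Replacing the mean embedding `μ_P` by the empirical one costs at most
`‖g‖ · MMD(P, P̂_N) ≤ ε ‖g‖` by Cauchy–Schwarz. -/

open MeasureTheory RealInnerProductSpace

section

variable {Ξ H : Type*} [MeasurableSpace Ξ] [NormedAddCommGroup H] [InnerProductSpace ℝ H]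

theorem real_inner_le_inner_add_mul_norm_of_norm_sub_le_s5 (g : H) {μ ν : H} {ε : ℝ}
    (h : ‖μ - ν‖ ≤ ε) : ⟪g, μ⟫ ≤ ⟪g, ν⟫ + ε * ‖g‖ :=
  calc ⟪g, μ⟫ = ⟪g, ν⟫ + ⟪g, μ - ν⟫ := by rw [inner_sub_right]; ring
    _ ≤ ⟪g, ν⟫ + ‖g‖ * ‖μ - ν‖ := by gcongr; exact real_inner_le_norm _ _
    _ ≤ ⟪g, ν⟫ + ε * ‖g‖ := by rw [mul_comm]; gcongr

theorem measureReal_le_integral_of_indicator_le {P : Measure Ξ} [IsFiniteMeasure P]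
    {s : Set Ξ} (hs : MeasurableSet s) {h : Ξ → ℝ} (hh : Integrable h P)
    (hle : ∀ ξ, s.indicator 1 ξ ≤ h ξ) : P.real s ≤ ∫ ξ, h ξ ∂P := by
  rw [← integral_indicator_one hs]
  exact integral_mono ((integrable_const 1).indicator hs) hh hle

theorem integral_const_add_inner [CompleteSpace H] {P : Measure Ξ} [IsProbabilityMeasure P]
    {φ : Ξ → H} (hφ : Integrable φ P) (g₀ : ℝ) (g : H) :
    ∫ ξ, g₀ + ⟪g, φ ξ⟫ ∂P = g₀ + ⟪g, ∫ ξ, φ ξ ∂P⟫ := by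
  rw [integral_add (integrable_const g₀) (hφ.const_inner g), integral_const, probReal_univ,
    one_smul, integral_inner hφ]

theorem measureReal_le_of_indicator_le_const_add_inner [CompleteSpace H] {φ : Ξ → H}
    {s : Set Ξ} (hs : MeasurableSet s) {g₀ : ℝ} {g : H}
    (hmaj : ∀ ξ, s.indicator 1 ξ ≤ g₀ + ⟪g, φ ξ⟫) {P : Measure Ξ} [IsProbabilityMeasure P]
    (hφ : Integrable φ P) {μ : H} {ε : ℝ} (hmmd : ‖∫ ξ, φ ξ ∂P - μ‖ ≤ ε) :
    P.real s ≤ g₀ + ⟪g, μ⟫ + ε * ‖g‖ :=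
  calc P.real s ≤ ∫ ξ, g₀ + ⟪g, φ ξ⟫ ∂P :=
        measureReal_le_integral_of_indicator_le hs ((integrable_const g₀).add (hφ.const_inner g))
          hmaj
    _ = g₀ + ⟪g, ∫ ξ, φ ξ ∂P⟫ := integral_const_add_inner hφ g₀ g
    _ ≤ g₀ + (⟪g, μ⟫ + ε * ‖g‖) := by
        gcongr; exact real_inner_le_inner_add_mul_norm_of_norm_sub_le_s5 g hmmd
    _ = g₀ + ⟪g, μ⟫ + ε * ‖g‖ := by ring

end

theorem weak_duality_indicator_constraint_general
    {Ξ : Type*} [MeasurableSpace Ξ]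
    {H : Type*} [NormedAddCommGroup H] [InnerProductSpace ℝ H] [CompleteSpace H]
    (φ : Ξ → H)
    {N : ℕ} (ξs : Fin N → Ξ)
    (ε : ℝ) (α : ℝ)
    (f : Ξ → ℝ) (hfm : Measurable f)
    (g₀ : ℝ) (g : H)
    (hmaj : ∀ ξ : Ξ, (if 0 < f ξ then (1 : ℝ) else 0) ≤ g₀ + ⟪g, φ ξ⟫) :
    (∀ P : Measure Ξ, IsProbabilityMeasure P → Integrable φ P →
      ‖(∫ ξ, φ ξ ∂P) - (N : ℝ)⁻¹ • ∑ i, φ (ξs i)‖ ≤ ε →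
      (P {ξ : Ξ | 0 < f ξ}).toReal
        ≤ g₀ + (N : ℝ)⁻¹ * ∑ i, ⟪g, φ (ξs i)⟫ + ε * ‖g‖)
    ∧
    (g₀ + (N : ℝ)⁻¹ * ∑ i, ⟪g, φ (ξs i)⟫ + ε * ‖g‖ ≤ α →
      ∀ P : Measure Ξ, IsProbabilityMeasure P → Integrable φ P →
        ‖(∫ ξ, φ ξ ∂P) - (N : ℝ)⁻¹ • ∑ i, φ (ξs i)‖ ≤ ε →
        1 - α ≤ (P {ξ : Ξ | f ξ ≤ 0}).toReal) := by
  have hS : MeasurableSet {ξ | 0 < f ξ} := measurableSet_lt measurable_const hfm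
  have hmaj' : ∀ ξ, {ξ | 0 < f ξ}.indicator 1 ξ ≤ g₀ + ⟪g, φ ξ⟫ := fun ξ => by
    simpa only [Set.indicator_apply, Set.mem_ofPred_eq, Pi.one_apply] using hmaj ξ
  have hbound : ∀ P : Measure Ξ, IsProbabilityMeasure P → Integrable φ P →
      ‖(∫ ξ, φ ξ ∂P) - (N : ℝ)⁻¹ • ∑ i, φ (ξs i)‖ ≤ ε →
      P.real {ξ | 0 < f ξ} ≤ g₀ + (N : ℝ)⁻¹ * ∑ i, ⟪g, φ (ξs i)⟫ + ε * ‖g‖ := by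
    intro P _ hφ hmmd
    simpa only [inner_smul_right, inner_sum] using
      measureReal_le_of_indicator_le_const_add_inner hS hmaj' hφ hmmd
  refine ⟨hbound, fun hdual P hP hφ hmmd => ?_⟩
  have hcompl : {ξ | f ξ ≤ 0} = {ξ | 0 < f ξ}ᶜ := by
    simp only [Set.compl_ofPred, not_lt]
  change 1 - α ≤ P.real {ξ | f ξ ≤ 0}
  rw [hcompl, probReal_compl_eq_one_sub hS]
  linarith [hbound P hP hφ hmmd]

/-- Weak duality for the indicator (chance) constraint.
`f` plays the role of `f(x, ·)` for a fixed decision `x`. If `g₀ + ⟪g, φ ·⟫`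
majorizes the indicator of `{ξ | f ξ > 0}` pointwise, then for every probability
measure `P` with `φ` Bochner-integrable and `MMD(P, P̂_N) ≤ ε` the probability
`P {f > 0}` is bounded by the dual objective; in particular, if the dual objective
is at most `α` then the chance constraint `P {f ≤ 0} ≥ 1 - α` holds for all such `P`. -/
theorem weak_duality_indicator_constraint
    {Ξ : Type*} [MetricSpace Ξ] [MeasurableSpace Ξ] [BorelSpace Ξ]
    {H : Type*} [NormedAddCommGroup H] [InnerProductSpace ℝ H] [CompleteSpace H]
    [MeasurableSpace H] [BorelSpace H]
    (φ : Ξ → H) (hφm : Measurable φ)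
    {N : ℕ} (hN : 0 < N) (ξs : Fin N → Ξ)
    (ε : ℝ) (hε : 0 < ε) (α : ℝ) (hα : α ∈ Set.Ioo (0 : ℝ) 1)
    (f : Ξ → ℝ) (hfm : Measurable f)
    (g₀ : ℝ) (g : H)
    (hmaj : ∀ ξ : Ξ, (if 0 < f ξ then (1 : ℝ) else 0) ≤ g₀ + ⟪g, φ ξ⟫) :
    (∀ P : Measure Ξ, IsProbabilityMeasure P → Integrable φ P →
      ‖(∫ ξ, φ ξ ∂P) - (N : ℝ)⁻¹ • ∑ i, φ (ξs i)‖ ≤ ε →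
      (P {ξ : Ξ | 0 < f ξ}).toReal
        ≤ g₀ + (N : ℝ)⁻¹ * ∑ i, ⟪g, φ (ξs i)⟫ + ε * ‖g‖)
    ∧
    (g₀ + (N : ℝ)⁻¹ * ∑ i, ⟪g, φ (ξs i)⟫ + ε * ‖g‖ ≤ α →
      ∀ P : Measure Ξ, IsProbabilityMeasure P → Integrable φ P →
        ‖(∫ ξ, φ ξ ∂P) - (N : ℝ)⁻¹ • ∑ i, φ (ξs i)‖ ≤ ε →
        1 - α ≤ (P {ξ : Ξ | f ξ ≤ 0}).toReal) :=
  weak_duality_indicator_constraint_general φ ξs ε α f hfm g₀ g hmaj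
end

section
/- Weak duality for the distributionally robust CVaR constraint. Fix a decision x, points ξ_1,…,ξ_N ∈ Ξ, ε > 0, α ∈ (0,1), and suppose f(x,·) : Ξ → ℝ is Borel measurable. Suppose t, g₀ ∈ ℝ and g ∈ H satisfy (f(x,ξ)+t)_+ ≤ g₀ + ⟨g, φ(ξ)⟩_H for every ξ ∈ Ξ. Then for every probability measure P on Ξ with φ P-Bochner-integrable, f(x,·) P-integrable, and MMD(P, P̂_N) ≤ ε, one has CVaR_{1−α}^P[f(x,·)] ≤ g₀ + (1/N)∑_{i=1}^N ⟨g, φ(ξ_i)⟩_H + ε‖g‖_H − tα. In particular, if g₀ + (1/N)∑_{i=1}^N ⟨g, φ(ξ_i)⟩_H + ε‖g‖_H ≤ tα, then sup over such P of CVaR_{1−α}^P[f(x,·)] is ≤ 0. -/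
open MeasureTheory RealInnerProductSpace

/-! Since `(f + t)_+ ≤ g₀ + ⟪g, φ⟫` pointwise, taking `P`-expectations and using that `⟪g, ·⟫` commutes
with the Bochner integral gives `E_P[(f + t)_+] ≤ g₀ + ⟪g, μ_P⟫`. By Cauchy–Schwarz and the MMD
ball, `⟪g, μ_P⟫ ≤ ⟪g, μ_{P̂_N}⟫ + ε‖g‖`, and the CVaR infimum is at most its value at `s = t`;
the infimum is a genuine one (not Lean's junk `0`) because for `α ∈ [0, 1]` the objective is
bounded below by `α E_P[f]`. -/

lemma mul_le_max_zero {α x : ℝ} (hα₀ : 0 ≤ α) (hα₁ : α ≤ 1) : α * x ≤ max x 0 := by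
  rcases le_total 0 x with hx | hx
  · nlinarith [le_max_left x 0]
  · nlinarith [le_max_right x 0]

section CVaR

variable {Ω : Type*} [MeasurableSpace Ω] {P : Measure Ω} {f : Ω → ℝ} {α : ℝ}

lemma bddBelow_range_cvar_objective [IsProbabilityMeasure P] (hf : Integrable f P)
    (hα₀ : 0 ≤ α) (hα₁ : α ≤ 1) :
    BddBelow (Set.range fun s : ℝ => ∫ ω, max (f ω + s) 0 ∂P - s * α) := by
  refine ⟨α * ∫ ω, f ω ∂P, ?_⟩
  rintro _ ⟨s, rfl⟩
  have hfs : Integrable (fun ω => f ω + s) P := hf.add (integrable_const s)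
  have hmono : ∫ ω, α * (f ω + s) ∂P ≤ ∫ ω, max (f ω + s) 0 ∂P :=
    integral_mono (hfs.const_mul α) hfs.pos_part fun ω => mul_le_max_zero hα₀ hα₁
  rw [integral_const_mul, integral_add hf (integrable_const s), integral_const] at hmono
  simp only [probReal_univ, smul_eq_mul, one_mul] at hmono
  linarith

lemma ciInf_cvar_objective_le [IsProbabilityMeasure P] (hf : Integrable f P)
    (hα₀ : 0 ≤ α) (hα₁ : α ≤ 1) {t b : ℝ} (hb : ∫ ω, max (f ω + t) 0 ∂P ≤ b) :
    (⨅ s : ℝ, (∫ ω, max (f ω + s) 0 ∂P - s * α)) ≤ b - t * α :=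
  (ciInf_le (bddBelow_range_cvar_objective hf hα₀ hα₁) t).trans (by linarith)

end CVaR

section KernelMeanEmbedding

variable {Ω : Type*} [MeasurableSpace Ω] {P : Measure Ω}
  {H : Type*} [NormedAddCommGroup H] [InnerProductSpace ℝ H] [CompleteSpace H] {φ : Ω → H}

lemma integral_le_add_inner_integral_of_le [IsProbabilityMeasure P] (hφ : Integrable φ P)
    {h : Ω → ℝ} (hh : Integrable h P) {g₀ : ℝ} {g : H} (hle : ∀ ω, h ω ≤ g₀ + ⟪g, φ ω⟫) :
    ∫ ω, h ω ∂P ≤ g₀ + ⟪g, ∫ ω, φ ω ∂P⟫ := by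
  have hinner : Integrable (fun ω => ⟪g, φ ω⟫) P := (innerSL ℝ g).integrable_comp hφ
  calc ∫ ω, h ω ∂P ≤ ∫ ω, (g₀ + ⟪g, φ ω⟫) ∂P :=
        integral_mono hh ((integrable_const g₀).add hinner) hle
    _ = g₀ + ⟪g, ∫ ω, φ ω ∂P⟫ := by
        rw [integral_add (integrable_const g₀) hinner, integral_const, probReal_univ, one_smul]
        congr 1
        exact (innerSL ℝ g).integral_comp_comm hφ

end KernelMeanEmbedding

lemma real_inner_le_inner_add_of_norm_sub_le {H : Type*} [NormedAddCommGroup H]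
    [InnerProductSpace ℝ H] {g x y : H} {ε : ℝ} (hxy : ‖x - y‖ ≤ ε) :
    ⟪g, x⟫ ≤ ⟪g, y⟫ + ε * ‖g‖ := by
  have hcs : ⟪g, x - y⟫ ≤ ‖g‖ * ‖x - y‖ := real_inner_le_norm g (x - y)
  rw [inner_sub_right] at hcs
  nlinarith [norm_nonneg g]

theorem weak_duality_DR_CVaR_constraint_general
    {Ξ : Type*} [MeasurableSpace Ξ]
    {H : Type*} [NormedAddCommGroup H] [InnerProductSpace ℝ H] [CompleteSpace H]
    (φ : Ξ → H)
    {N : ℕ} (ξs : Fin N → Ξ)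
    (ε : ℝ) (α : ℝ) (hα : α ∈ Set.Ioo (0 : ℝ) 1)
    (f : Ξ → ℝ)
    (t g₀ : ℝ) (g : H)
    (hmaj : ∀ ξ : Ξ, max (f ξ + t) 0 ≤ g₀ + ⟪g, φ ξ⟫) :
    (∀ P : Measure Ξ, IsProbabilityMeasure P → Integrable φ P → Integrable f P →
      ‖(∫ ξ, φ ξ ∂P) - (N : ℝ)⁻¹ • ∑ i, φ (ξs i)‖ ≤ ε →
      (⨅ s : ℝ, (∫ ξ, max (f ξ + s) 0 ∂P - s * α))
        ≤ g₀ + (N : ℝ)⁻¹ * ∑ i, ⟪g, φ (ξs i)⟫ + ε * ‖g‖ - t * α)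
    ∧
    (g₀ + (N : ℝ)⁻¹ * ∑ i, ⟪g, φ (ξs i)⟫ + ε * ‖g‖ ≤ t * α →
      ∀ P : Measure Ξ, IsProbabilityMeasure P → Integrable φ P → Integrable f P →
        ‖(∫ ξ, φ ξ ∂P) - (N : ℝ)⁻¹ • ∑ i, φ (ξs i)‖ ≤ ε →
        (⨅ s : ℝ, (∫ ξ, max (f ξ + s) 0 ∂P - s * α)) ≤ 0) := by
  have bound : ∀ P : Measure Ξ, IsProbabilityMeasure P → Integrable φ P → Integrable f P →
      ‖(∫ ξ, φ ξ ∂P) - (N : ℝ)⁻¹ • ∑ i, φ (ξs i)‖ ≤ ε →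
      (⨅ s : ℝ, (∫ ξ, max (f ξ + s) 0 ∂P - s * α))
        ≤ g₀ + (N : ℝ)⁻¹ * ∑ i, ⟪g, φ (ξs i)⟫ + ε * ‖g‖ - t * α := by
    intro P _ hφ hf hmmd
    have hexp := integral_le_add_inner_integral_of_le hφ
      (h := fun ξ => max (f ξ + t) 0) (hf.add (integrable_const t)).pos_part hmaj
    have hmean := real_inner_le_inner_add_of_norm_sub_le (g := g) hmmd
    rw [inner_smul_right, inner_sum] at hmean
    exact ciInf_cvar_objective_le hf hα.1.le hα.2.le (by linarith)
  exact ⟨bound, fun hdual P hP hφ hf hmmd => (bound P hP hφ hf hmmd).trans (by linarith)⟩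

/-- Weak duality for the distributionally robust CVaR constraint.
`f` plays the role of `f(x, ·)` for a fixed decision `x`;
`CVaR_{1-α}^P[f] = ⨅ s, (E_P[(f+s)_+] - sα)`. If `g₀ + ⟪g, φ ·⟫` majorizes
`(f + t)_+` pointwise, then for every probability measure `P` with `φ`
Bochner-integrable, `f` `P`-integrable and `MMD(P, P̂_N) ≤ ε`, the CVaR is bounded
by the dual objective minus `tα`; in particular if the dual objective is at most
`tα` then `CVaR_{1-α}^P[f] ≤ 0` for every such `P`. -/
theorem weak_duality_DR_CVaR_constraint
    {Ξ : Type*} [MetricSpace Ξ] [MeasurableSpace Ξ] [BorelSpace Ξ]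
    {H : Type*} [NormedAddCommGroup H] [InnerProductSpace ℝ H] [CompleteSpace H]
    [MeasurableSpace H] [BorelSpace H]
    (φ : Ξ → H) (hφm : Measurable φ)
    {N : ℕ} (hN : 0 < N) (ξs : Fin N → Ξ)
    (ε : ℝ) (hε : 0 < ε) (α : ℝ) (hα : α ∈ Set.Ioo (0 : ℝ) 1)
    (f : Ξ → ℝ) (hfm : Measurable f)
    (t g₀ : ℝ) (g : H)
    (hmaj : ∀ ξ : Ξ, max (f ξ + t) 0 ≤ g₀ + ⟪g, φ ξ⟫) :
    (∀ P : Measure Ξ, IsProbabilityMeasure P → Integrable φ P → Integrable f P →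
      ‖(∫ ξ, φ ξ ∂P) - (N : ℝ)⁻¹ • ∑ i, φ (ξs i)‖ ≤ ε →
      (⨅ s : ℝ, (∫ ξ, max (f ξ + s) 0 ∂P - s * α))
        ≤ g₀ + (N : ℝ)⁻¹ * ∑ i, ⟪g, φ (ξs i)⟫ + ε * ‖g‖ - t * α)
    ∧
    (g₀ + (N : ℝ)⁻¹ * ∑ i, ⟪g, φ (ξs i)⟫ + ε * ‖g‖ ≤ t * α →
      ∀ P : Measure Ξ, IsProbabilityMeasure P → Integrable φ P → Integrable f P →
        ‖(∫ ξ, φ ξ ∂P) - (N : ℝ)⁻¹ • ∑ i, φ (ξs i)‖ ≤ ε →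
        (⨅ s : ℝ, (∫ ξ, max (f ξ + s) 0 ∂P - s * α)) ≤ 0) :=
  weak_duality_DR_CVaR_constraint_general φ ξs ε α hα f t g₀ g hmaj
end

section
/- Finite-sample concentration of the empirical kernel mean embedding (the dimension-free radius bound, equation (5)). Let P₀ be a probability measure on Ξ, suppose the kernel satisfies sup_{ξ∈Ξ} k(ξ,ξ) ≤ C for some constant C > 0 (equivalently ‖φ(ξ)‖_H² ≤ C for all ξ), and let δ ∈ (0,1). Let ξ_1,…,ξ_N be i.i.d. with law P₀ and let P̂_N = (1/N)∑_{i=1}^N δ_{ξ_i} be the empirical measure. Then with probability at least 1−δ over the sample, MMD(P₀, P̂_N) = ‖μ_{P₀} − (1/N)∑_{i=1}^N φ(ξ_i)‖_H ≤ √(C/N) + √(2C log(1/δ)/N). -/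
/-!
Replacing one sample point moves `ξs ↦ ‖μ_P - (1/N) ∑ φ(ξs i)‖` by at most `2√C/N`, so by
McDiarmid's inequality this quantity exceeds its mean by `ε` with probability at most
`exp (-N ε² / (2C))`. Its mean is at most `√(C/N)` by Jensen, because its second moment is
`(E‖φ‖² - ‖μ_P‖²)/N`: the cross terms of independent centred summands vanish.

McDiarmid's inequality is obtained in sub-Gaussian form by induction on the number of coordinates:
`f - E f` splits into the fluctuation of `f` in the first coordinate, which is sub-Gaussian by
Hoeffding's lemma whatever the other coordinates are, and the fluctuation of the average of `f`
over the first coordinate, which has bounded differences in the remaining ones.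
-/

open MeasureTheory RealInnerProductSpace
open Real ProbabilityTheory
open scoped NNReal

lemma MeasureTheory.AEStronglyMeasurable.exists_stronglyMeasurable_norm_le
    {α E : Type*} {mα : MeasurableSpace α} {μ : Measure α} [NormedAddCommGroup E] {f : α → E}
    (hf : AEStronglyMeasurable f μ) {R : ℝ} (hR : 0 ≤ R) (hfR : ∀ᵐ x ∂μ, ‖f x‖ ≤ R) :
    ∃ g, StronglyMeasurable g ∧ (∀ x, ‖g x‖ ≤ R) ∧ f =ᵐ[μ] g := by
  set s := {x | ‖hf.mk f x‖ ≤ R}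
  have hs : MeasurableSet s := measurableSet_le hf.stronglyMeasurable_mk.norm.measurable
    measurable_const
  refine ⟨s.indicator (hf.mk f), hf.stronglyMeasurable_mk.indicator hs, fun x => ?_, ?_⟩
  · by_cases hx : x ∈ s
    · rwa [Set.indicator_of_mem hx]
    · rwa [Set.indicator_of_notMem hx, norm_zero]
  · filter_upwards [hf.ae_eq_mk, hfR] with x hx hxR
    rw [Set.indicator_of_mem (show x ∈ s by rwa [hx] at hxR), hx]

section FinCons

variable {Ξ : Type*} [MeasurableSpace Ξ] (P : Measure Ξ) [SigmaFinite P] {n : ℕ}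

lemma MeasurableEquiv.piFinSuccAbove_zero_symm_apply (p : Ξ × (Fin n → Ξ)) :
    (MeasurableEquiv.piFinSuccAbove (fun _ : Fin (n + 1) => Ξ) 0).symm p = Fin.cons p.1 p.2 :=
  Fin.insertNth_zero' p.1 p.2

lemma measurable_fin_cons :
    Measurable fun p : Ξ × (Fin n → Ξ) => (Fin.cons p.1 p.2 : Fin (n + 1) → Ξ) := by
  have := (MeasurableEquiv.piFinSuccAbove (fun _ : Fin (n + 1) => Ξ) 0).symm.measurable
  rwa [funext MeasurableEquiv.piFinSuccAbove_zero_symm_apply] at this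

lemma measurePreserving_piFinSuccAbove_zero_symm :
    MeasurePreserving (MeasurableEquiv.piFinSuccAbove (fun _ : Fin (n + 1) => Ξ) 0).symm
      (P.prod (Measure.pi fun _ : Fin n => P)) (Measure.pi fun _ => P) :=
  (measurePreserving_piFinSuccAbove (fun _ => P) 0).symm

lemma integral_pi_eq_integral_integral_cons {E : Type*} [NormedAddCommGroup E] [NormedSpace ℝ E]
    {F : (Fin (n + 1) → Ξ) → E} (hF : Integrable F (Measure.pi fun _ => P)) :
    ∫ x, F x ∂(Measure.pi fun _ => P) =
      ∫ y, ∫ a, F (Fin.cons a y) ∂P ∂(Measure.pi fun _ : Fin n => P) := by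
  have he := measurePreserving_piFinSuccAbove_zero_symm P (n := n)
  rw [← he.integral_comp', integral_prod_symm]
  · simp only [MeasurableEquiv.piFinSuccAbove_zero_symm_apply]
  · exact (he.integrable_comp_emb (MeasurableEquiv.measurableEmbedding _)).2 hF

end FinCons

namespace ProbabilityTheory.HasSubgaussianMGF

variable {α β : Type*} {mα : MeasurableSpace α} {mβ : MeasurableSpace β}
  {μ : Measure α} {ν : Measure β} {c : ℝ≥0}

lemma of_measurePreserving_comp {X : β → ℝ} (e : α ≃ᵐ β) (he : MeasurePreserving e μ ν)
    (h : HasSubgaussianMGF (X ∘ e) c μ) : HasSubgaussianMGF X c ν where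
  integrable_exp_mul t :=
    (he.integrable_comp_emb e.measurableEmbedding).1 (h.integrable_exp_mul t)
  mgf_le t := by
    rw [mgf, ← he.integral_comp']
    exact h.mgf_le t

lemma add_prod_of_forall [SFinite μ] [SFinite ν] {Y : α × β → ℝ} {X : β → ℝ} {cY cX : ℝ≥0}
    (hYm : Measurable Y) (hY : ∀ b, HasSubgaussianMGF (fun a => Y (a, b)) cY μ)
    (hX : HasSubgaussianMGF X cX ν) :
    HasSubgaussianMGF (fun p => Y p + X p.2) (cY + cX) (μ.prod ν) := by
  have hint : ∀ t, Integrable (fun p => exp (t * (Y p + X p.2))) (μ.prod ν) := by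
    intro t
    have hm : AEStronglyMeasurable (fun p => exp (t * (Y p + X p.2))) (μ.prod ν) :=
      continuous_exp.comp_aestronglyMeasurable
        ((hYm.aestronglyMeasurable.add hX.aestronglyMeasurable.comp_snd).const_mul t)
    refine (integrable_prod_iff' hm).2 ⟨ae_of_all _ fun b => ?_, ?_⟩
    · simp_rw [mul_add, exp_add]
      exact ((hY b).integrable_exp_mul t).mul_const _
    · refine ((hX.integrable_exp_mul t).const_mul (exp (cY * t ^ 2 / 2))).mono'
        hm.norm.prod_swap.integral_prod_right' (ae_of_all _ fun b => ?_)
      simp only [norm_eq_abs, abs_exp]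
      rw [abs_of_nonneg (integral_nonneg fun _ => (exp_pos _).le)]
      simp_rw [mul_add, exp_add, integral_mul_const]
      exact mul_le_mul_of_nonneg_right ((hY b).mgf_le t) (exp_pos _).le
  refine ⟨hint, fun t => ?_⟩
  calc mgf (fun p => Y p + X p.2) (μ.prod ν) t
      = ∫ b, mgf (fun a => Y (a, b)) μ t * exp (t * X b) ∂ν := by
        rw [mgf, integral_prod_symm _ (hint t)]
        simp_rw [mul_add, exp_add, integral_mul_const, mgf]
    _ ≤ ∫ b, exp (cY * t ^ 2 / 2) * exp (t * X b) ∂ν := by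
        refine integral_mono_of_nonneg (ae_of_all _ fun b => mul_nonneg mgf_nonneg (exp_pos _).le)
          ((hX.integrable_exp_mul t).const_mul _) (ae_of_all _ fun b => ?_)
        exact mul_le_mul_of_nonneg_right ((hY b).mgf_le t) (exp_pos _).le
    _ ≤ exp (↑(cY + cX) * t ^ 2 / 2) := by
        rw [integral_const_mul, NNReal.coe_add, add_mul, add_div, exp_add]
        gcongr
        exact hX.mgf_le t

end ProbabilityTheory.HasSubgaussianMGF

namespace ProbabilityTheory

variable {α : Type*} {mα : MeasurableSpace α} {μ : Measure α} [IsProbabilityMeasure μ]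

lemma HasSubgaussianMGF.one_sub_exp_le_measureReal_le_add {f : α → ℝ} {m : ℝ} {c : ℝ≥0}
    (h : HasSubgaussianMGF (fun x => f x - m) c μ) (hf : AEMeasurable f μ) {ε : ℝ} (hε : 0 ≤ ε) :
    1 - exp (-ε ^ 2 / (2 * c)) ≤ μ.real {x | f x ≤ m + ε} := by
  have hs : NullMeasurableSet {x | ε ≤ f x - m} μ :=
    nullMeasurableSet_le aemeasurable_const (hf.sub_const m)
  calc 1 - exp (-ε ^ 2 / (2 * c)) ≤ 1 - μ.real {x | ε ≤ f x - m} := by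
        linarith [h.measure_ge_le hε]
    _ = μ.real {x | ε ≤ f x - m}ᶜ := (probReal_compl_eq_one_sub₀ hs).symm
    _ ≤ μ.real {x | f x ≤ m + ε} :=
        measureReal_mono fun x hx => by
          simp only [Set.mem_compl_iff, Set.mem_ofPred_eq, not_le] at hx ⊢
          linarith

lemma hasSubgaussianMGF_sub_integral_of_forall_sub_le {h : α → ℝ} (hm : AEMeasurable h μ)
    {c : ℝ≥0} (hc : ∀ a a', h a - h a' ≤ c) :
    HasSubgaussianMGF (fun a => h a - ∫ x, h x ∂μ) ((c / 2) ^ 2) μ := by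
  have : Nonempty α := nonempty_of_isProbabilityMeasure μ
  have hbdd : BddBelow (Set.range h) :=
    ⟨h (Classical.arbitrary α) - c, Set.forall_mem_range.2 fun a => by
      linarith [hc (Classical.arbitrary α) a]⟩
  have hIcc : ∀ a, h a ∈ Set.Icc (⨅ a, h a) ((⨅ a, h a) + c) := fun a =>
    ⟨ciInf_le hbdd a, by linarith [le_ciInf fun a' => (by linarith [hc a a'] : h a - c ≤ h a')]⟩
  simpa using hasSubgaussianMGF_of_mem_Icc hm (ae_of_all _ hIcc)

lemma integrable_of_forall_sub_le {h : α → ℝ} (hm : AEStronglyMeasurable h μ) {c : ℝ}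
    (hc : ∀ a a', h a - h a' ≤ c) : Integrable h μ := by
  obtain ⟨a₀⟩ := nonempty_of_isProbabilityMeasure μ
  refine .of_bound hm (|h a₀| + c) (ae_of_all _ fun a => ?_)
  rw [norm_eq_abs, abs_le]
  constructor <;> linarith [hc a a₀, hc a₀ a, neg_abs_le (h a₀), le_abs_self (h a₀)]

end ProbabilityTheory

section BoundedDifferences

variable {α : Type*}

def HasBoundedDifferences {ι : Type*} [DecidableEq ι] (f : (ι → α) → ℝ) (c : ι → ℝ≥0) : Prop :=
  ∀ x i a, |f (Function.update x i a) - f x| ≤ c i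

namespace HasBoundedDifferences

variable {n : ℕ} {f : (Fin (n + 1) → α) → ℝ} {c : Fin (n + 1) → ℝ≥0}

lemma cons_sub_cons_le (hf : HasBoundedDifferences f c) (a a' : α) (y : Fin n → α) :
    f (Fin.cons a y) - f (Fin.cons a' y) ≤ c 0 := by
  have := hf (Fin.cons a' y) 0 a
  rw [Fin.update_cons_zero] at this
  exact (le_abs_self _).trans this

lemma cons (hf : HasBoundedDifferences f c) (a : α) :
    HasBoundedDifferences (fun y : Fin n → α => f (Fin.cons a y)) (fun i => c i.succ) :=
  fun y i b => by simpa only [Fin.cons_update] using hf (Fin.cons a y) i.succ b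

lemma integral_cons [MeasurableSpace α] {μ : Measure α} [IsProbabilityMeasure μ]
    (hf : HasBoundedDifferences f c) (hint : ∀ y, Integrable (fun a => f (Fin.cons a y)) μ) :
    HasBoundedDifferences (fun y => ∫ a, f (Fin.cons a y) ∂μ) (fun i => c i.succ) := by
  intro y i b
  rw [← integral_sub (hint _) (hint _)]
  simpa using norm_integral_le_of_norm_le_const (μ := μ) (C := c i.succ)
    (f := fun a => f (Fin.cons a (Function.update y i b)) - f (Fin.cons a y))
    (ae_of_all _ fun a => hf.cons a y i b)

end HasBoundedDifferences

theorem hasSubgaussianMGF_sub_integral_of_hasBoundedDifferences [MeasurableSpace α]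
    (μ : Measure α) [IsProbabilityMeasure μ] :
    ∀ {n : ℕ} {f : (Fin n → α) → ℝ} {c : Fin n → ℝ≥0}, Measurable f →
      HasBoundedDifferences f c →
      HasSubgaussianMGF (fun x => f x - ∫ z, f z ∂(Measure.pi fun _ => μ)) (∑ i, (c i / 2) ^ 2)
        (Measure.pi fun _ => μ)
  | 0, f, c, _, _ => by
    have hconst : (fun x : Fin 0 → α => f x - ∫ z, f z ∂(Measure.pi fun _ => μ)) = fun _ => 0 := by
      funext x
      simp [Subsingleton.elim _ x]
    simp [hconst, HasSubgaussianMGF.fun_zero]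
  | n + 1, f, c, hfm, hf => by
    set g : (Fin n → α) → ℝ := fun y => ∫ a, f (Fin.cons a y) ∂μ
    have hFm : Measurable fun p : α × (Fin n → α) => f (Fin.cons p.1 p.2) :=
      hfm.comp measurable_fin_cons
    have hslice_m (y : Fin n → α) : Measurable fun a => f (Fin.cons a y) :=
      hFm.comp measurable_prodMk_right
    have hgm : Measurable g := hFm.stronglyMeasurable.integral_prod_left'.measurable
    have hX := hasSubgaussianMGF_sub_integral_of_hasBoundedDifferences μ hgm
      (hf.integral_cons fun y => integrable_of_forall_sub_le (hslice_m y).aestronglyMeasurable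
        fun a a' => hf.cons_sub_cons_le a a' y)
    have hY (y : Fin n → α) :
        HasSubgaussianMGF (fun a => f (Fin.cons a y) - g y) ((c 0 / 2) ^ 2) μ :=
      hasSubgaussianMGF_sub_integral_of_forall_sub_le (hslice_m y).aemeasurable
        fun a a' => hf.cons_sub_cons_le a a' y
    have hcomb : HasSubgaussianMGF (fun x => f x - ∫ y, g y ∂(Measure.pi fun _ => μ))
        (∑ i, (c i / 2) ^ 2) (Measure.pi fun _ => μ) := by
      refine .of_measurePreserving_comp _ (measurePreserving_piFinSuccAbove_zero_symm μ) ?_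
      rw [Fin.sum_univ_succ]
      convert HasSubgaussianMGF.add_prod_of_forall (hFm.sub (hgm.comp measurable_snd)) hY hX
        using 1
      funext p
      simp only [Function.comp_apply, Pi.sub_apply, MeasurableEquiv.piFinSuccAbove_zero_symm_apply]
      ring
    have hmean : ∫ y, g y ∂(Measure.pi fun _ => μ) = ∫ z, f z ∂(Measure.pi fun _ => μ) := by
      -- Fubini needs `f` integrable, which follows from `hcomb`.
      refine (integral_pi_eq_integral_integral_cons μ ?_).symm
      exact (hcomb.integrable.add (integrable_const (∫ y, g y ∂(Measure.pi fun _ => μ)))).congr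
        (ae_of_all _ fun x => sub_add_cancel (f x) _)
    rwa [hmean] at hcomb

end BoundedDifferences

section EmpiricalMMD

variable {Ξ : Type*} [MeasurableSpace Ξ]
  {H : Type*} [NormedAddCommGroup H] [InnerProductSpace ℝ H]

noncomputable def empiricalMMD (φ : Ξ → H) (P : Measure Ξ) {n : ℕ} (ξs : Fin n → Ξ) : ℝ :=
  ‖(∫ ξ, φ ξ ∂P) - (n : ℝ)⁻¹ • ∑ i, φ (ξs i)‖

lemma empiricalMMD_hasBoundedDifferences {φ : Ξ → H} (P : Measure Ξ) {R : ℝ≥0}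
    (hφ : ∀ ξ, ‖φ ξ‖ ≤ R) (n : ℕ) :
    HasBoundedDifferences (empiricalMMD φ P (n := n)) fun _ => 2 * R / n := by
  intro ξs i a
  have hsum : ∑ j, φ (ξs j) - ∑ j, φ (Function.update ξs i a j) = φ (ξs i) - φ a := by
    rw [← Finset.sum_sub_distrib, Fintype.sum_eq_single i fun j hj => by
      simp [Function.update_of_ne hj], Function.update_self]
  calc |empiricalMMD φ P (Function.update ξs i a) - empiricalMMD φ P ξs|
      ≤ ‖(n : ℝ)⁻¹ • (φ (ξs i) - φ a)‖ := by
        refine (abs_norm_sub_norm_le _ _).trans_eq ?_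
        rw [← hsum, smul_sub]
        congr 1
        abel
    _ ≤ (n : ℝ)⁻¹ * (R + R) := by
        rw [norm_smul, norm_inv, RCLike.norm_natCast]
        gcongr
        exact (norm_sub_le _ _).trans (add_le_add (hφ _) (hφ _))
    _ = ((2 * R / n : ℝ≥0) : ℝ) := by
        push_cast
        ring

lemma empiricalMMD_eq {φ : Ξ → H} (P : Measure Ξ) {n : ℕ} (hn : n ≠ 0) (ξs : Fin n → Ξ) :
    empiricalMMD φ P ξs = (n : ℝ)⁻¹ * ‖∑ i, (φ (ξs i) - ∫ ξ, φ ξ ∂P)‖ := by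
  have hsum : (n : ℝ)⁻¹ • ∑ i, (φ (ξs i) - ∫ ξ, φ ξ ∂P) =
      (n : ℝ)⁻¹ • ∑ i, φ (ξs i) - ∫ ξ, φ ξ ∂P := by
    rw [Finset.sum_sub_distrib, Finset.sum_const, Finset.card_univ, Fintype.card_fin, smul_sub,
      ← Nat.cast_smul_eq_nsmul ℝ, smul_smul, inv_mul_cancel₀ (Nat.cast_ne_zero.2 hn), one_smul]
  rw [empiricalMMD, ← norm_neg, neg_sub, ← hsum, norm_smul, norm_inv, RCLike.norm_natCast]

lemma measurable_empiricalMMD {φ : Ξ → H} (hφ : StronglyMeasurable φ) (P : Measure Ξ) (n : ℕ) :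
    Measurable (empiricalMMD φ P (n := n)) :=
  (stronglyMeasurable_const.sub ((Finset.stronglyMeasurable_fun_sum _ fun i _ =>
    hφ.comp_measurable (measurable_pi_apply i)).const_smul _)).norm.measurable

variable (P : Measure Ξ) [IsProbabilityMeasure P]

lemma empiricalMMD_ae_eq {φ ψ : Ξ → H} (h : φ =ᵐ[P] ψ) (n : ℕ) :
    empiricalMMD φ P =ᵐ[Measure.pi fun _ : Fin n => P] empiricalMMD ψ P := by
  have hcoord : ∀ᵐ ξs ∂(Measure.pi fun _ : Fin n => P), ∀ i, φ (ξs i) = ψ (ξs i) :=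
    ae_all_iff.2 fun i => (measurePreserving_eval _ i).quasiMeasurePreserving.ae_eq h
  filter_upwards [hcoord] with ξs hξs
  simp only [empiricalMMD, integral_congr_ae h, hξs]

variable [CompleteSpace H]

lemma integral_norm_sum_sq {Z : Ξ → H} (hZ : MemLp Z 2 P) (h0 : ∫ ξ, Z ξ ∂P = 0) :
    ∀ n : ℕ, ∫ x, ‖∑ i, Z (x i)‖ ^ 2 ∂(Measure.pi fun _ : Fin n => P) =
      n * ∫ ξ, ‖Z ξ‖ ^ 2 ∂P
  | 0 => by simp
  | n + 1 => by
    have hS (k : ℕ) : MemLp (fun x : Fin k → Ξ => ∑ i, Z (x i)) 2 (Measure.pi fun _ => P) :=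
      memLp_finsetSum _ fun i _ => hZ.comp_measurePreserving (measurePreserving_eval _ i)
    have hinner (v : H) : ∫ a, ‖Z a + v‖ ^ 2 ∂P = (∫ ξ, ‖Z ξ‖ ^ 2 ∂P) + ‖v‖ ^ 2 := by
      have hZ1 := hZ.integrable one_le_two
      have hcross : ∫ a, ⟪Z a, v⟫ ∂P = 0 := by
        simp_rw [real_inner_comm v]
        rw [integral_inner hZ1, h0, inner_zero_right]
      have hcross_int : Integrable (fun a => 2 * ⟪Z a, v⟫) P := (hZ1.inner_const v).const_mul 2
      simp_rw [norm_add_sq_real]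
      rw [integral_add (f := fun a => ‖Z a‖ ^ 2 + 2 * ⟪Z a, v⟫)
          (hZ.integrable_norm_pow'.add hcross_int) (integrable_const _),
        integral_add hZ.integrable_norm_pow' hcross_int, integral_const_mul, hcross, integral_const,
        probReal_univ, one_smul]
      ring
    rw [integral_pi_eq_integral_integral_cons P (hS (n + 1)).integrable_norm_pow']
    simp_rw [Fin.sum_univ_succ, Fin.cons_zero, Fin.cons_succ, hinner]
    rw [integral_add (integrable_const _) (hS n).integrable_norm_pow', integral_const,
      integral_norm_sum_sq hZ h0 n]
    simp
    ring

lemma integral_norm_sub_integral_sq {φ : Ξ → H} (hφ : MemLp φ 2 P) :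
    ∫ ξ, ‖φ ξ - ∫ ξ', φ ξ' ∂P‖ ^ 2 ∂P = (∫ ξ, ‖φ ξ‖ ^ 2 ∂P) - ‖∫ ξ, φ ξ ∂P‖ ^ 2 := by
  set μφ := ∫ ξ, φ ξ ∂P
  have hφ1 := hφ.integrable one_le_two
  have hcross : ∫ ξ, ⟪φ ξ, μφ⟫ ∂P = ‖μφ‖ ^ 2 := by
    simp_rw [real_inner_comm μφ]
    rw [integral_inner hφ1, real_inner_self_eq_norm_sq]
  have hcross_int : Integrable (fun ξ => 2 * ⟪φ ξ, μφ⟫) P := (hφ1.inner_const μφ).const_mul 2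
  simp_rw [norm_sub_sq_real]
  rw [integral_add (f := fun ξ => ‖φ ξ‖ ^ 2 - 2 * ⟪φ ξ, μφ⟫)
      (hφ.integrable_norm_pow'.sub hcross_int) (integrable_const _),
    integral_sub hφ.integrable_norm_pow' hcross_int, integral_const_mul, hcross, integral_const,
    probReal_univ, one_smul]
  ring

lemma integral_empiricalMMD_sq {φ : Ξ → H} (hφ : MemLp φ 2 P) {n : ℕ} (hn : n ≠ 0) :
    ∫ ξs, empiricalMMD φ P ξs ^ 2 ∂(Measure.pi fun _ : Fin n => P) =
      ((∫ ξ, ‖φ ξ‖ ^ 2 ∂P) - ‖∫ ξ, φ ξ ∂P‖ ^ 2) / n := by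
  have hZ : MemLp (fun ξ => φ ξ - ∫ ξ', φ ξ' ∂P) 2 P := hφ.sub (memLp_const _)
  have h0 : ∫ ξ, (φ ξ - ∫ ξ', φ ξ' ∂P) ∂P = 0 := by
    rw [integral_sub (hφ.integrable one_le_two) (integrable_const _), integral_const,
      probReal_univ, one_smul, sub_self]
  simp_rw [empiricalMMD_eq P hn, mul_pow]
  rw [integral_const_mul, integral_norm_sum_sq P hZ h0, integral_norm_sub_integral_sq P hφ]
  field_simp

lemma integral_empiricalMMD_le {φ : Ξ → H} (hφ : MemLp φ 2 P) {n : ℕ} (hn : n ≠ 0) :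
    ∫ ξs, empiricalMMD φ P ξs ∂(Measure.pi fun _ : Fin n => P) ≤
      √((∫ ξ, ‖φ ξ‖ ^ 2 ∂P) / n) := by
  have hL2 : MemLp (empiricalMMD φ P (n := n)) 2 (Measure.pi fun _ => P) :=
    ((memLp_const _).sub ((memLp_finsetSum _ fun i _ =>
      hφ.comp_measurePreserving (measurePreserving_eval _ i)).const_smul _)).norm
  have hvar := variance_nonneg (empiricalMMD φ P (n := n)) (Measure.pi fun _ => P)
  rw [variance_eq_sub hL2] at hvar
  refine Real.le_sqrt_of_sq_le ?_
  calc (∫ ξs, empiricalMMD φ P ξs ∂(Measure.pi fun _ => P)) ^ 2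
      ≤ ∫ ξs, empiricalMMD φ P ξs ^ 2 ∂(Measure.pi fun _ => P) := by simpa using hvar
    _ ≤ (∫ ξ, ‖φ ξ‖ ^ 2 ∂P) / n := by
        rw [integral_empiricalMMD_sq P hφ hn]
        gcongr
        exact sub_le_self _ (sq_nonneg _)

theorem one_sub_exp_le_measureReal_empiricalMMD_le {φ : Ξ → H} (hφ : StronglyMeasurable φ)
    {R : ℝ≥0} (hφR : ∀ ξ, ‖φ ξ‖ ≤ R) {n : ℕ} (hn : n ≠ 0) {ε : ℝ} (hε : 0 ≤ ε) :
    1 - exp (-ε ^ 2 / (2 * (R ^ 2 / n))) ≤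
      (Measure.pi fun _ : Fin n => P).real {ξs | empiricalMMD φ P ξs ≤ √(R ^ 2 / n) + ε} := by
  have hmean : ∫ ξs, empiricalMMD φ P ξs ∂(Measure.pi fun _ : Fin n => P) ≤ √(R ^ 2 / n) := by
    refine (integral_empiricalMMD_le P (.of_bound hφ.aestronglyMeasurable R (ae_of_all _ hφR))
      hn).trans (sqrt_le_sqrt (div_le_div_of_nonneg_right ?_ n.cast_nonneg))
    refine (integral_mono_of_nonneg (ae_of_all _ fun _ => by positivity)
      (integrable_const ((R : ℝ) ^ 2)) (ae_of_all _ fun ξ => ?_)).trans_eq (by simp)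
    exact pow_le_pow_left₀ (norm_nonneg _) (hφR ξ) 2
  have hparam : ((∑ _i : Fin n, ((2 * R / n : ℝ≥0) / 2) ^ 2 : ℝ≥0) : ℝ) = R ^ 2 / n := by
    push_cast
    rw [Finset.sum_const, Finset.card_univ, Fintype.card_fin, nsmul_eq_mul]
    field_simp
  have htail := (hasSubgaussianMGF_sub_integral_of_hasBoundedDifferences P
    (measurable_empiricalMMD hφ P n) (empiricalMMD_hasBoundedDifferences P hφR n)
    ).one_sub_exp_le_measureReal_le_add (measurable_empiricalMMD hφ P n).aemeasurable hε
  rw [hparam] at htail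
  refine htail.trans (measureReal_mono fun ξs hξs => ?_)
  simp only [Set.mem_ofPred_eq] at hξs ⊢
  linarith

end EmpiricalMMD

theorem empirical_kme_concentration_general
    {Ξ : Type*} [MeasurableSpace Ξ]
    {H : Type*} [NormedAddCommGroup H] [InnerProductSpace ℝ H] [CompleteSpace H]
    (φ : Ξ → H)
    (P₀ : Measure Ξ) [IsProbabilityMeasure P₀] (hφi : Integrable φ P₀)
    (C : ℝ) (hC : 0 < C) (hbound : ∀ ξ : Ξ, ‖φ ξ‖ ^ 2 ≤ C)
    (δ : ℝ) (hδ : δ ∈ Set.Ioo (0 : ℝ) 1)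
    {N : ℕ} (hN : 0 < N) :
    1 - δ ≤ ((Measure.pi fun _ : Fin N => P₀)
      {ξs : Fin N → Ξ |
        ‖(∫ ξ, φ ξ ∂P₀) - (N : ℝ)⁻¹ • ∑ i, φ (ξs i)‖
          ≤ Real.sqrt (C / N) + Real.sqrt (2 * C * Real.log (1 / δ) / N)}).toReal := by
  obtain ⟨hδ0, hδ1⟩ := hδ
  set R : ℝ≥0 := ⟨√C, sqrt_nonneg C⟩
  have hR : (R : ℝ) ^ 2 = C := sq_sqrt hC.le
  -- `H` need not be separable, so `φ` itself need not be strongly measurable.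
  obtain ⟨ψ, hψm, hψR, hφψ⟩ := hφi.aestronglyMeasurable.exists_stronglyMeasurable_norm_le R.2
    (ae_of_all _ fun ξ => (le_sqrt (norm_nonneg _) hC.le).2 (hbound ξ))
  set ε := √(2 * C * log (1 / δ) / N)
  have hδexp : exp (-ε ^ 2 / (2 * (C / N))) = δ := by
    rw [sq_sqrt (by have := log_nonneg (one_le_one_div hδ0 hδ1.le); positivity)]
    field_simp
    rw [exp_neg, exp_log (by positivity), one_div, inv_inv]
  have hconc := one_sub_exp_le_measureReal_empiricalMMD_le P₀ hψm hψR hN.ne' (sqrt_nonneg _)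
    (ε := ε)
  rw [hR, hδexp] at hconc
  exact hconc.trans_eq
    (measureReal_congr ((empiricalMMD_ae_eq P₀ hφψ N).symm.fun_comp (· ≤ √(C / N) + ε)))

/-- Finite-sample concentration of the empirical kernel mean embedding
(the dimension-free radius bound, equation (5)). If the kernel is bounded,
`k(ξ, ξ) = ‖φ ξ‖² ≤ C`, then for an i.i.d. sample `ξ_1, …, ξ_N ~ P₀`
(modeled by the product measure on `Fin N → Ξ`), with probability at least `1 - δ`,
`MMD(P₀, P̂_N) = ‖μ_{P₀} - (1/N) ∑ i, φ (ξ_i)‖ ≤ √(C/N) + √(2 C log(1/δ) / N)`. -/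
theorem empirical_kme_concentration
    {Ξ : Type*} [MetricSpace Ξ] [MeasurableSpace Ξ] [BorelSpace Ξ]
    {H : Type*} [NormedAddCommGroup H] [InnerProductSpace ℝ H] [CompleteSpace H]
    [MeasurableSpace H] [BorelSpace H]
    (φ : Ξ → H) (hφm : Measurable φ)
    (P₀ : Measure Ξ) [IsProbabilityMeasure P₀] (hφi : Integrable φ P₀)
    (C : ℝ) (hC : 0 < C) (hbound : ∀ ξ : Ξ, ‖φ ξ‖ ^ 2 ≤ C)
    (δ : ℝ) (hδ : δ ∈ Set.Ioo (0 : ℝ) 1)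
    {N : ℕ} (hN : 0 < N) :
    1 - δ ≤ ((Measure.pi fun _ : Fin N => P₀)
      {ξs : Fin N → Ξ |
        ‖(∫ ξ, φ ξ ∂P₀) - (N : ℝ)⁻¹ • ∑ i, φ (ξs i)‖
          ≤ Real.sqrt (C / N) + Real.sqrt (2 * C * Real.log (1 / δ) / N)}).toReal :=
  empirical_kme_concentration_general φ P₀ hφi C hC hbound δ hδ hN
end
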